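/- arXiv:2403.17168 — 11 statements merged into one kernel-verified Lean document; each statement's English description precedes it below -/
import Mathlib

section
/- Let Δ and I be finite nonempty sets, a : I → Sym(Δ) and σ ∈ Sym(I). Let O be the set of orbits of the cyclic group ⟨σ⟩ on I, and for each orbit θ ∈ O fix a representative ι_θ ∈ θ. Then there exists z : I → Sym(Δ) such that w(z,1)⁻¹ ∘ w(a,σ) ∘ w(z,1) = w(b,σ), where b : I → Sym(Δ) satisfies b(i) = 1 for every i ∈ I that is not one of the chosen representatives ι_θ, and for each orbit θ ∈ O, b(ι_θ) = a(ι_θ) ∘ a(σ^{|θ|−1}(ι_θ)) ∘ ⋯ ∘ a(σ²(ι_θ)) ∘ a(σ(ι_θ)) (composition of permutations, the rightmost factor applied first). -/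
/-!
Conjugating `w(a,σ)` by a base element `w(z,1)` replaces `a` by `i ↦ z(i)⁻¹ a(i) z(σ⁻¹ i)`.
Walking along each orbit from its representative `r`, put
`z(σᵏ r) = a(σᵏ r) a(σᵏ⁻¹ r) ⋯ a(σ r)` for `0 ≤ k < |θ|`, so that `z(r) = 1`. Off the
representatives `z(i) = a(i) z(σ⁻¹ i)`, which makes the new coordinate `1`; at `r` what
remains is `a(r) z(σ⁻¹ r)`, the product of `a` once around the orbit.
-/

namespace Stmt1

/-- The element `w(a,σ)` of the wreath product `Sym(Δ) ≀ Sym(I)` in its product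
action on `Δ^I`: `(w(a,σ)(δ))(i) = a(i)(δ(σ⁻¹(i)))`. -/
def w {Δ I : Type*} (a : I → Equiv.Perm Δ) (σ : Equiv.Perm I) : Equiv.Perm (I → Δ) where
  toFun δ i := a i (δ (σ⁻¹ i))
  invFun δ i := (a (σ i))⁻¹ (δ (σ i))
  left_inv δ := by funext i; simp
  right_inv δ := by funext i; simp

theorem w_one_inv_mul_w_mul_w_one {Δ I : Type*} (z a : I → Equiv.Perm Δ) (σ : Equiv.Perm I) :
    (w z 1)⁻¹ * w a σ * w z 1 = w (fun i => (z i)⁻¹ * a i * z (σ⁻¹ i)) σ := by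
  ext δ i
  simp [w, Equiv.Perm.inv_def]

end Stmt1

namespace Equiv.Perm

variable {α : Type*}

theorem card_sameCycle_eq_minimalPeriod [Finite α] (σ : Perm α) (x : α) :
    Nat.card {y | σ.SameCycle x y} = Function.minimalPeriod σ x := by
  have horbit : {y | σ.SameCycle x y} = MulAction.orbit (Subgroup.zpowers σ) x := by
    ext y
    simp only [Set.mem_ofPred_eq, MulAction.mem_orbit_iff, Subgroup.exists_zpowers]
    rfl
  rw [horbit, Nat.card_congr (MulAction.orbitZPowersEquiv σ x), Nat.card_zmod]
  rfl

/-- Junk value `0` when `y` is not of the form `(σ ^ k) x`. -/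
noncomputable def minPow (σ : Perm α) (x y : α) : ℕ :=
  sInf {k | (σ ^ k) x = y}

variable {σ : Perm α} {x y : α}

theorem minPow_le {k : ℕ} (hk : (σ ^ k) x = y) : σ.minPow x y ≤ k :=
  Nat.sInf_le hk

theorem pow_minPow [Finite α] (h : σ.SameCycle x y) : (σ ^ σ.minPow x y) x = y :=
  Nat.sInf_mem h.exists_nat_pow_eq

theorem minPow_self : σ.minPow x x = 0 :=
  Nat.le_zero.1 (minPow_le (pow_zero σ ▸ rfl))

theorem pow_minPow_inv_add_one [Finite α] (h : σ.SameCycle x (σ⁻¹ y)) :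
    (σ ^ (σ.minPow x (σ⁻¹ y) + 1)) x = y := by
  rw [pow_succ', mul_apply, pow_minPow h]
  exact σ.apply_symm_apply y

theorem minPow_inv_add_one_of_ne [Finite α] (h : σ.SameCycle x y) (hne : y ≠ x) :
    σ.minPow x (σ⁻¹ y) + 1 = σ.minPow x y := by
  have h' : σ.SameCycle x (σ⁻¹ y) := h.trans ⟨-1, by simp⟩
  have hpos : σ.minPow x y ≠ 0 := fun h0 => hne (by simpa [h0] using (pow_minPow h).symm)
  have hle : σ.minPow x (σ⁻¹ y) ≤ σ.minPow x y - 1 := minPow_le <| by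
    rw [eq_inv_iff_eq, ← mul_apply, ← pow_succ', Nat.sub_add_cancel (Nat.pos_of_ne_zero hpos),
      pow_minPow h]
  have hge : σ.minPow x y ≤ σ.minPow x (σ⁻¹ y) + 1 := minPow_le (pow_minPow_inv_add_one h')
  omega

theorem minPow_inv_self_add_one [Finite α] :
    σ.minPow x (σ⁻¹ x) + 1 = Function.minimalPeriod σ x := by
  have h : σ.SameCycle x (σ⁻¹ x) := ⟨-1, by simp⟩
  have hper : Function.IsPeriodicPt σ (σ.minPow x (σ⁻¹ x) + 1) x := by
    rw [Function.IsPeriodicPt, Function.IsFixedPt, ← coe_pow, pow_minPow_inv_add_one h]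
  have hpos := hper.minimalPeriod_pos (Nat.succ_pos _)
  have hle : σ.minPow x (σ⁻¹ x) ≤ Function.minimalPeriod σ x - 1 := minPow_le <| by
    rw [eq_inv_iff_eq, ← mul_apply, ← pow_succ', Nat.sub_add_cancel hpos, coe_pow]
    exact Function.isPeriodicPt_minimalPeriod σ x
  have hge := hper.minimalPeriod_le (Nat.succ_pos _)
  omega

variable {M : Type*} [Monoid M]

/-- `orbitProd a σ x m = a (σ^m x) * a (σ^(m-1) x) * ⋯ * a (σ x)`. -/
def orbitProd (a : α → M) (σ : Perm α) (x : α) (m : ℕ) : M :=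
  ((List.range m).map fun j => a ((σ ^ (m - j)) x)).prod

@[simp]
theorem orbitProd_zero (a : α → M) : orbitProd a σ x 0 = 1 := rfl

theorem orbitProd_succ (a : α → M) (m : ℕ) :
    orbitProd a σ x (m + 1) = a ((σ ^ (m + 1)) x) * orbitProd a σ x m := by
  simp only [orbitProd, List.prod_range_succ', Nat.sub_zero, Nat.succ_sub_succ]

theorem orbitProd_eq_of_isPeriodicPt (a : α → M) {n : ℕ} (hn : Function.IsPeriodicPt σ n x) :
    orbitProd a σ x n = ((List.range n).map fun k => a ((σ ^ ((n - k) % n)) x)).prod := by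
  refine congrArg List.prod (List.map_congr_left fun k _ => ?_)
  rw [coe_pow, coe_pow, hn.iterate_mod_apply]

theorem orbitProd_minPow_of_ne [Finite α] (a : α → M) (h : σ.SameCycle x y) (hne : y ≠ x) :
    orbitProd a σ x (σ.minPow x y) = a y * orbitProd a σ x (σ.minPow x (σ⁻¹ y)) := by
  have hsucc := minPow_inv_add_one_of_ne h hne
  rw [← hsucc, orbitProd_succ, hsucc, pow_minPow h]

theorem mul_orbitProd_minPow_inv_self [Finite α] (a : α → M) :
    a x * orbitProd a σ x (σ.minPow x (σ⁻¹ x)) =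
      orbitProd a σ x (Function.minimalPeriod σ x) := by
  rw [← minPow_inv_self_add_one, orbitProd_succ, minPow_inv_self_add_one, coe_pow,
    Function.isPeriodicPt_minimalPeriod σ x]

end Equiv.Perm

open Equiv.Perm

open Stmt1 in
theorem statement1_general {Δ I : Type*} [Fintype I]
    (a : I → Equiv.Perm Δ) (σ : Equiv.Perm I) (ι : I → I)
    (hrep : ∀ i : I, σ.SameCycle i (ι i))
    (hconst : ∀ i j : I, σ.SameCycle i j → ι i = ι j) :
    ∃ z b : I → Equiv.Perm Δ,
      (∀ i : I, i ∉ Set.range ι → b i = 1) ∧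
      (∀ r ∈ Set.range ι,
        b r = ((List.range (Nat.card {j : I | σ.SameCycle r j})).map
            (fun k => a ((σ ^ ((Nat.card {j : I | σ.SameCycle r j} - k)
                % Nat.card {j : I | σ.SameCycle r j})) r))).prod) ∧
      (w z 1)⁻¹ * w a σ * w z 1 = w b σ := by
  have hι_inv (i : I) : ι (σ⁻¹ i) = ι i := hconst _ _ ⟨1, by simp⟩
  set z : I → Equiv.Perm Δ := fun i => orbitProd a σ (ι i) (σ.minPow (ι i) i)
  refine ⟨z, _, ?_, ?_, w_one_inv_mul_w_mul_w_one z a σ⟩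
  · intro i hi
    have hz : z i = a i * z (σ⁻¹ i) := by
      simp only [z, hι_inv]
      exact orbitProd_minPow_of_ne a (hrep i).symm fun h => hi ⟨i, h.symm⟩
    rw [hz, mul_assoc, inv_mul_cancel]
  · rintro _ ⟨i, rfl⟩
    have hr : ι (ι i) = ι i := (hconst _ _ (hrep i)).symm
    simp only [z, hι_inv, hr, minPow_self, orbitProd_zero, inv_one, one_mul]
    rw [mul_orbitProd_minPow_inv_self, card_sameCycle_eq_minimalPeriod,
      orbitProd_eq_of_isPeriodicPt a (Function.isPeriodicPt_minimalPeriod σ _)]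

open Stmt1 in
/-- **Lemma 2.4 (existence of reduced forms)**: given `a : I → Sym(Δ)`, `σ ∈ Sym(I)`,
and a choice of representatives of the orbits of `⟨σ⟩` on `I` (encoded by a function
`ι` constant on orbits with `ι i` in the orbit of `i`), there is `z : I → Sym(Δ)`
with `w(z,1)⁻¹ ∘ w(a,σ) ∘ w(z,1) = w(b,σ)`, where `b i = 1` away from the
representatives and, at a representative `r` with orbit of size `n`,
`b r = a(r) ∘ a(σ^{n−1}(r)) ∘ ⋯ ∘ a(σ(r))` (rightmost factor applied first). -/
theorem statement1 {Δ I : Type*} [Fintype Δ] [Fintype I] [Nonempty Δ] [Nonempty I]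
    (a : I → Equiv.Perm Δ) (σ : Equiv.Perm I) (ι : I → I)
    (hrep : ∀ i : I, σ.SameCycle i (ι i))
    (hconst : ∀ i j : I, σ.SameCycle i j → ι i = ι j) :
    ∃ z b : I → Equiv.Perm Δ,
      (∀ i : I, i ∉ Set.range ι → b i = 1) ∧
      (∀ r ∈ Set.range ι,
        b r = ((List.range (Nat.card {j : I | σ.SameCycle r j})).map
            (fun k => a ((σ ^ ((Nat.card {j : I | σ.SameCycle r j} - k)
                % Nat.card {j : I | σ.SameCycle r j})) r))).prod) ∧
      (w z 1)⁻¹ * w a σ * w z 1 = w b σ :=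
  statement1_general a σ ι hrep hconst
end

section
/- For every positive integer α there exists a positive integer L(α), depending only on α, with the following property. Let ℓ ≥ L(α) be an integer and let e₁,…,e_n and f₁,…,f_m be positive integers with e₁+⋯+e_n = ℓ and f₁+⋯+f_m = ℓ. Assume that Σ_{i=1}^{n} Σ_{j=1}^{m} (e_i − gcd(e_i,f_j)) ≤ 2(α+1)ℓ − 2 and Σ_{i=1}^{n} Σ_{j=1}^{m} (f_j − gcd(e_i,f_j)) ≤ 2(α+1)ℓ − 2. Then one of the following holds: (a) there exists k ∈ {1,2,3,4,5,6} such that both the number of indices i with e_i = k and the number of indices j with f_j = k are at least ℓ/k − 2(α+1)(k+1) − (2/3)(α+1)(k²−1); or (b) for every k ∈ {1,2,3,4,5,6}, both the number of indices i with e_i = k and the number of indices j with f_j = k are at most 2(α+1)(k+1). -/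
open Finset

private lemma extractc {n : ℕ} (p : Fin n → Prop) [DecidablePred p] (F : Fin n → ℕ) (c : ℕ)
    (h : ∀ i, p i → c ≤ F i) : (univ.filter p).card * c ≤ ∑ i, F i := by
  calc (univ.filter p).card * c = ∑ _i ∈ univ.filter p, c := by
        rw [Finset.sum_const, smul_eq_mul]
    _ ≤ ∑ i ∈ univ.filter p, F i :=
        Finset.sum_le_sum (fun i hi => h i (Finset.mem_filter.mp hi).2)
    _ ≤ ∑ i, F i := Finset.sum_le_sum_of_subset (Finset.filter_subset _ _)

private lemma ptwise (v x : ℕ) (hv : 0 < v) (hx : 0 < x) (hne : x ≠ v) :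
    x ≤ (v - Nat.gcd v x) + 2 * (x - Nat.gcd v x) := by
  have hgv : Nat.gcd v x ∣ v := Nat.gcd_dvd_left v x
  have hgx : Nat.gcd v x ∣ x := Nat.gcd_dvd_right v x
  have hgx' : Nat.gcd v x ≤ x := Nat.le_of_dvd hx hgx
  have hgv' : Nat.gcd v x ≤ v := Nat.le_of_dvd hv hgv
  rcases eq_or_ne (Nat.gcd v x) v with h | h
  · obtain ⟨c, hc⟩ := h ▸ hgx
    have hc2 : 2 ≤ c := by
      rcases Nat.lt_or_ge c 2 with hc' | hc'
      · interval_cases c <;> omega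
      · exact hc'
    have h2v : 2 * v ≤ x := by
      calc 2 * v ≤ v * c := by nlinarith
        _ = x := hc.symm
    omega
  · have hlt : Nat.gcd v x < v := lt_of_le_of_ne hgv' h
    have h2g : 2 * Nat.gcd v x ≤ v := by
      obtain ⟨d, hd⟩ := hgv
      have hg0 : 0 < Nat.gcd v x := Nat.gcd_pos_of_pos_left x hv
      have hd2 : 2 ≤ d := by
        rcases Nat.lt_or_ge d 2 with hd' | hd'
        · interval_cases d <;> omega
        · exact hd'
      calc 2 * Nat.gcd v x ≤ Nat.gcd v x * d := by nlinarith
        _ = v := hd.symm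
    omega

private lemma onesided {m : ℕ} (f : Fin m → ℕ) (hf : ∀ j, 0 < f j) (v : ℕ) (hv : 0 < v) :
    ∑ j, f j ≤ v * (univ.filter fun j => f j = v).card
      + ((∑ j, (v - Nat.gcd v (f j))) + 2 * ∑ j, (f j - Nat.gcd v (f j))) := by
  classical
  have hsplit : ∑ j, f j = (∑ j ∈ univ.filter (fun j => f j = v), f j)
      + ∑ j ∈ univ.filter (fun j => ¬ f j = v), f j :=
    (Finset.sum_filter_add_sum_filter_not _ _ _).symm
  have h1 : (∑ j ∈ univ.filter (fun j => f j = v), f j)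
      = v * (univ.filter fun j => f j = v).card := by
    rw [Finset.sum_congr rfl (fun j hj => (Finset.mem_filter.mp hj).2), Finset.sum_const,
      smul_eq_mul, mul_comm]
  have h2 : ∑ j ∈ univ.filter (fun j => ¬ f j = v), f j
      ≤ ∑ j ∈ univ.filter (fun j => ¬ f j = v),
          ((v - Nat.gcd v (f j)) + 2 * (f j - Nat.gcd v (f j))) :=
    Finset.sum_le_sum fun j hj => ptwise v (f j) hv (hf j) (Finset.mem_filter.mp hj).2
  have h3 : ∑ j ∈ univ.filter (fun j => ¬ f j = v),
        ((v - Nat.gcd v (f j)) + 2 * (f j - Nat.gcd v (f j)))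
      ≤ ∑ j, ((v - Nat.gcd v (f j)) + 2 * (f j - Nat.gcd v (f j))) :=
    Finset.sum_le_sum_of_subset (Finset.filter_subset _ _)
  have h4 : ∑ j, ((v - Nat.gcd v (f j)) + 2 * (f j - Nat.gcd v (f j)))
      = (∑ j, (v - Nat.gcd v (f j))) + 2 * ∑ j, (f j - Nat.gcd v (f j)) := by
    rw [Finset.sum_add_distrib, ← Finset.mul_sum]
  rw [h4] at h3
  omega

private lemma rowfacts {n m : ℕ} (e : Fin n → ℕ) (f : Fin m → ℕ) (v : ℕ) :
    (univ.filter fun i => e i = v).card * (∑ j, (v - Nat.gcd v (f j)))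
        ≤ ∑ i, ∑ j, (e i - Nat.gcd (e i) (f j)) ∧
    (univ.filter fun i => e i = v).card * (∑ j, (f j - Nat.gcd v (f j)))
        ≤ ∑ i, ∑ j, (f j - Nat.gcd (e i) (f j)) := by
  constructor
  · apply extractc
    intro i hi
    apply le_of_eq
    rw [hi]
  · apply extractc (fun i => e i = v) (fun i => ∑ j, (f j - Nat.gcd (e i) (f j)))
    intro i hi
    apply le_of_eq
    rw [hi]

private lemma extract2 {n m : ℕ} (e : Fin n → ℕ) (f : Fin m → ℕ) (k v : ℕ) :
    (univ.filter fun i => e i = k).card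
        * ((univ.filter fun j => f j = v).card * (k - Nat.gcd k v))
      ≤ ∑ i, ∑ j, (e i - Nat.gcd (e i) (f j)) := by
  apply extractc
  intro i hi
  rw [hi]
  apply extractc (fun j => f j = v) (fun j => k - Nat.gcd k (f j))
  intro j hj
  apply le_of_eq
  rw [hj]

private lemma stepT (A ℓ v C P T S : ℕ) (h1 : ℓ ≤ v * P + C) (h2 : P * T ≤ S)
    (h3 : S + 2 ≤ A * ℓ) (h4 : C * (A * v + 1) < ℓ) : T ≤ A * v := by
  by_contra hT
  push_neg at hT
  have e1 : P * (A * v + 1) ≤ S := le_trans (Nat.mul_le_mul_left P hT) h2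
  have e2 : v * (P * (A * v + 1)) ≤ v * (A * ℓ) := Nat.mul_le_mul_left v (by omega)
  have e3 : ℓ * (A * v + 1) ≤ (v * P + C) * (A * v + 1) := Nat.mul_le_mul_right _ h1
  nlinarith

set_option maxHeartbeats 2000000 in
private lemma main_lemma (A ℓ : ℕ) {n m : ℕ} (e : Fin n → ℕ) (f : Fin m → ℕ)
    (hA : 4 ≤ A) (hL : 100000 * A ^ 3 ≤ ℓ)
    (he : ∀ i, 0 < e i) (hf : ∀ j, 0 < f j)
    (hse : ∑ i, e i = ℓ) (hsf : ∑ j, f j = ℓ)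
    (hS1 : (∑ i, ∑ j, (e i - Nat.gcd (e i) (f j))) + 2 ≤ A * ℓ)
    (hS2 : (∑ i, ∑ j, (f j - Nat.gcd (e i) (f j))) + 2 ≤ A * ℓ)
    (k₀ : ℕ) (hk1 : 1 ≤ k₀) (hk6 : k₀ ≤ 6)
    (hbig : A * (k₀ + 1) + 1 ≤ (univ.filter fun i => e i = k₀).card) :
    ∃ v, 1 ≤ v ∧ v ≤ 6 ∧
      3 * ℓ ≤ 3 * (v * (univ.filter fun i => e i = v).card) + A * (v * (v + 1) * (v + 2)) ∧
      3 * ℓ ≤ 3 * (v * (univ.filter fun j => f j = v).card) + A * (v * (v + 1) * (v + 2)) := by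
  classical
  have hA1 : 1 ≤ A := by omega
  have hA0 : 0 < A := by omega
  have hl0 : 0 < ℓ := lt_of_lt_of_le (by positivity) hL
  -- swapped versions of the hypotheses
  have hswap1 : (∑ j, ∑ i, (e i - Nat.gcd (f j) (e i))) = ∑ i, ∑ j, (e i - Nat.gcd (e i) (f j)) := by
    rw [Finset.sum_comm]
    exact Finset.sum_congr rfl fun i _ => Finset.sum_congr rfl fun j _ => by rw [Nat.gcd_comm]
  have hswap2 : (∑ j, ∑ i, (f j - Nat.gcd (f j) (e i))) = ∑ i, ∑ j, (f j - Nat.gcd (e i) (f j)) := by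
    rw [Finset.sum_comm]
    exact Finset.sum_congr rfl fun i _ => Finset.sum_congr rfl fun j _ => by rw [Nat.gcd_comm]
  -- STEP 1 : a value v < 2k₀ with many f's equal to v
  obtain ⟨v, hv1, hvlt, hQv⟩ :
      ∃ v, 1 ≤ v ∧ v < 2 * k₀ ∧ ℓ ≤ 847 * A * (univ.filter fun j => f j = v).card := by
    rcases eq_or_lt_of_le hk1 with hk | hk2
    · -- k₀ = 1
      subst hk
      refine ⟨1, le_refl 1, by omega, ?_⟩
      have hrow := (rowfacts e f 1).2
      have hT1z : (∑ j, (1 - Nat.gcd 1 (f j))) = 0 := by simp [Nat.gcd_one_left]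
      have hone := onesided f hf 1 one_pos
      rw [hsf, hT1z] at hone
      -- hone : ℓ ≤ 1 * Q1 + (0 + 2 * T₂)
      set Q1 := (univ.filter fun j => f j = 1).card with hQ1
      set T2 := ∑ j, (f j - Nat.gcd 1 (f j)) with hT2d
      have hP1 : 2 * A + 1 ≤ (univ.filter fun i => e i = 1).card := by
        have := hbig; omega
      have h1 : (2 * A + 1) * T2 ≤ A * ℓ := by
        calc (2 * A + 1) * T2 ≤ (univ.filter fun i => e i = 1).card * T2 :=
              Nat.mul_le_mul_right _ hP1
          _ ≤ ∑ i, ∑ j, (f j - Nat.gcd (e i) (f j)) := hrow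
          _ ≤ A * ℓ := by omega
      have h2 : (2 * A + 1) * ℓ ≤ (2 * A + 1) * Q1 + 2 * ((2 * A + 1) * T2) := by
        calc (2 * A + 1) * ℓ ≤ (2 * A + 1) * (1 * Q1 + (0 + 2 * T2)) :=
              Nat.mul_le_mul_left _ hone
          _ = (2 * A + 1) * Q1 + 2 * ((2 * A + 1) * T2) := by ring
      have h3 : ℓ ≤ (2 * A + 1) * Q1 := by nlinarith
      calc ℓ ≤ (2 * A + 1) * Q1 := h3
        _ ≤ 847 * A * Q1 := Nat.mul_le_mul_right _ (by omega)
    · -- 2 ≤ k₀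
      have hk2' : 2 ≤ k₀ := hk2
      set T2 := ∑ j, (f j - Nat.gcd k₀ (f j)) with hT2d
      have hrow := (rowfacts e f k₀).2
      have hT : (k₀ + 1) * T2 ≤ ℓ := by
        have h1 : (A * (k₀ + 1)) * T2 ≤ A * ℓ := by
          calc (A * (k₀ + 1)) * T2 ≤ (univ.filter fun i => e i = k₀).card * T2 :=
                Nat.mul_le_mul_right _ (by omega)
            _ ≤ ∑ i, ∑ j, (f j - Nat.gcd (e i) (f j)) := hrow
            _ ≤ A * ℓ := by omega
        have h2 : A * ((k₀ + 1) * T2) ≤ A * ℓ := by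
          calc A * ((k₀ + 1) * T2) = (A * (k₀ + 1)) * T2 := by ring
            _ ≤ A * ℓ := h1
        exact Nat.le_of_mul_le_mul_left h2 (by omega)
      have hsplit : (∑ j ∈ univ.filter (fun j => f j < 2 * k₀), f j)
          + (∑ j ∈ univ.filter (fun j => ¬ f j < 2 * k₀), f j) = ℓ := by
        rw [Finset.sum_filter_add_sum_filter_not]; exact hsf
      have hhigh : (∑ j ∈ univ.filter (fun j => ¬ f j < 2 * k₀), f j) ≤ 2 * T2 := by
        calc (∑ j ∈ univ.filter (fun j => ¬ f j < 2 * k₀), f j)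
            ≤ ∑ j ∈ univ.filter (fun j => ¬ f j < 2 * k₀), 2 * (f j - Nat.gcd k₀ (f j)) := by
              apply Finset.sum_le_sum
              intro j hj
              have hj2 : 2 * k₀ ≤ f j := by
                have := (Finset.mem_filter.mp hj).2; omega
              have hg : Nat.gcd k₀ (f j) ≤ k₀ := Nat.gcd_le_left _ (by omega)
              omega
          _ ≤ ∑ j, 2 * (f j - Nat.gcd k₀ (f j)) :=
              Finset.sum_le_sum_of_subset (Finset.filter_subset _ _)
          _ = 2 * T2 := by rw [← Finset.mul_sum]
      set Slow := ∑ j ∈ univ.filter (fun j => f j < 2 * k₀), f j with hSlowd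
      have hlow : ℓ ≤ (k₀ + 1) * Slow := by nlinarith
      -- fiberwise decomposition
      have hmaps : ∀ j ∈ univ.filter (fun j => f j < 2 * k₀), f j ∈ Finset.Ico 1 (2 * k₀) :=
        fun j hj => Finset.mem_Ico.mpr ⟨hf j, (Finset.mem_filter.mp hj).2⟩
      have hfib := Finset.sum_fiberwise_of_maps_to hmaps f
      have hfibb : Slow ≤ ∑ w ∈ Finset.Ico 1 (2 * k₀), w * (univ.filter fun j => f j = w).card := by
        rw [hSlowd, ← hfib]
        apply Finset.sum_le_sum
        intro w hw
        calc (∑ j ∈ (univ.filter (fun j => f j < 2 * k₀)).filter (fun j => f j = w), f j)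
            = ∑ j ∈ (univ.filter (fun j => f j < 2 * k₀)).filter (fun j => f j = w), w := by
              exact Finset.sum_congr rfl fun j hj => (Finset.mem_filter.mp hj).2
          _ = ((univ.filter (fun j => f j < 2 * k₀)).filter (fun j => f j = w)).card * w := by
              rw [Finset.sum_const, smul_eq_mul]
          _ ≤ (univ.filter fun j => f j = w).card * w := by
              apply Nat.mul_le_mul_right
              apply Finset.card_le_card
              exact Finset.filter_subset_filter _ (Finset.subset_univ _)
          _ = w * (univ.filter fun j => f j = w).card := mul_comm _ _
      have hne : (Finset.Ico 1 (2 * k₀)).Nonempty := ⟨1, Finset.mem_Ico.mpr ⟨le_refl 1, by omega⟩⟩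
      have hcard : (Finset.Ico 1 (2 * k₀)).card ≤ 11 := by rw [Nat.card_Ico]; omega
      set Stot := ∑ w ∈ Finset.Ico 1 (2 * k₀), w * (univ.filter fun j => f j = w).card with hStotd
      have hpig : ∃ w ∈ Finset.Ico 1 (2 * k₀),
          Stot ≤ 11 * (w * (univ.filter fun j => f j = w).card) := by
        apply Finset.exists_le_of_sum_le hne
        calc ∑ _w ∈ Finset.Ico 1 (2 * k₀), Stot = (Finset.Ico 1 (2 * k₀)).card * Stot := by
              rw [Finset.sum_const, smul_eq_mul]
          _ ≤ 11 * Stot := Nat.mul_le_mul_right _ hcard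
          _ = ∑ w ∈ Finset.Ico 1 (2 * k₀), 11 * (w * (univ.filter fun j => f j = w).card) := by
              rw [← Finset.mul_sum]
      obtain ⟨w, hw, hw2⟩ := hpig
      obtain ⟨hw1, hwlt⟩ := Finset.mem_Ico.mp hw
      refine ⟨w, hw1, hwlt, ?_⟩
      have hw11 : w ≤ 11 := by omega
      have hQw : w * (univ.filter fun j => f j = w).card ≤ 11 * (univ.filter fun j => f j = w).card :=
        Nat.mul_le_mul_right _ hw11
      have hk7 : k₀ + 1 ≤ 7 := by omega
      calc ℓ ≤ (k₀ + 1) * Slow := hlow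
        _ ≤ 7 * Slow := Nat.mul_le_mul_right _ hk7
        _ ≤ 7 * Stot := Nat.mul_le_mul_left _ hfibb
        _ ≤ 7 * (11 * (w * (univ.filter fun j => f j = w).card)) := Nat.mul_le_mul_left _ hw2
        _ ≤ 7 * (11 * (11 * (univ.filter fun j => f j = w).card)) := by
            exact Nat.mul_le_mul_left _ (Nat.mul_le_mul_left _ hQw)
        _ = 847 * (univ.filter fun j => f j = w).card := by ring
        _ ≤ 847 * A * (univ.filter fun j => f j = w).card := by
            have : (847 : ℕ) ≤ 847 * A := by omega
            exact Nat.mul_le_mul_right _ this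
  -- abbreviations
  set Pv := (univ.filter fun i => e i = v).card with hPvd
  set Qv := (univ.filter fun j => f j = v).card with hQvd
  set S1 := ∑ i, ∑ j, (e i - Nat.gcd (e i) (f j)) with hS1d
  set S2 := ∑ i, ∑ j, (f j - Nat.gcd (e i) (f j)) with hS2d
  have hv11 : v ≤ 11 := by omega
  have hQvpos : 0 < Qv := by
    rcases Nat.eq_zero_or_pos Qv with h | h
    · rw [h, Nat.mul_zero] at hQv; omega
    · exact h
  -- row facts for value v, both directions
  have hT1 : Pv * (∑ j, (v - Nat.gcd v (f j))) ≤ S1 := (rowfacts e f v).1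
  have hT2 : Pv * (∑ j, (f j - Nat.gcd v (f j))) ≤ S2 := (rowfacts e f v).2
  have hU1 : Qv * (∑ i, (v - Nat.gcd v (e i))) ≤ S2 := by
    have := (rowfacts f e v).1
    rw [hswap2] at this
    exact this
  have hU2 : Qv * (∑ i, (e i - Nat.gcd v (e i))) ≤ S1 := by
    have := (rowfacts f e v).2
    rw [hswap1] at this
    exact this
  set T1 := ∑ j, (v - Nat.gcd v (f j)) with hT1d
  set T2 := ∑ j, (f j - Nat.gcd v (f j)) with hT2d
  set U1 := ∑ i, (v - Nat.gcd v (e i)) with hU1d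
  set U2 := ∑ i, (e i - Nat.gcd v (e i)) with hU2d
  have honeF : ℓ ≤ v * Qv + (T1 + 2 * T2) := by
    have := onesided f hf v (by omega)
    rw [hsf] at this
    exact this
  have honeE : ℓ ≤ v * Pv + (U1 + 2 * U2) := by
    have := onesided e he v (by omega)
    rw [hse] at this
    exact this
  -- STEP 2 : ℓ ≤ v*Pv + 2541 A²
  have hS1l : S1 ≤ A * ℓ := by omega
  have hS2l : S2 ≤ A * ℓ := by omega
  have hP2 : ℓ ≤ v * Pv + 2541 * A ^ 2 := by
    have h1 : Qv * ℓ ≤ Qv * (v * Pv) + 3 * (A * ℓ) := by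
      calc Qv * ℓ ≤ Qv * (v * Pv + (U1 + 2 * U2)) := Nat.mul_le_mul_left _ honeE
        _ = Qv * (v * Pv) + (Qv * U1 + 2 * (Qv * U2)) := by ring
        _ ≤ Qv * (v * Pv) + (S2 + 2 * S1) := by
            have := Nat.mul_le_mul_left 2 hU2
            omega
        _ ≤ Qv * (v * Pv) + 3 * (A * ℓ) := by omega
    have h2 : 3 * (A * ℓ) ≤ Qv * (2541 * A ^ 2) := by
      calc 3 * (A * ℓ) ≤ 3 * (A * (847 * A * Qv)) := by
            exact Nat.mul_le_mul_left _ (Nat.mul_le_mul_left _ hQv)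
        _ = Qv * (2541 * A ^ 2) := by ring
    have h3 : Qv * ℓ ≤ Qv * (v * Pv + 2541 * A ^ 2) := by
      calc Qv * ℓ ≤ Qv * (v * Pv) + Qv * (2541 * A ^ 2) := by omega
        _ = Qv * (v * Pv + 2541 * A ^ 2) := by ring
    exact Nat.le_of_mul_le_mul_left h3 hQvpos
  -- STEP 3a : ℓ ≤ v*Qv + C₂  where C₂ = 2541 A² + 33 A
  have hvP : v * Pv ≤ ℓ := by
    have := extractc (fun i => e i = v) e v (fun i hi => le_of_eq hi.symm)
    rw [hse] at this
    calc v * Pv = Pv * v := mul_comm _ _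
      _ ≤ ℓ := this
  have hQ2 : ℓ ≤ v * Qv + (2541 * A ^ 2 + 33 * A) := by
    have hPl : Pv * ℓ ≤ Pv * (v * Qv) + 3 * (A * ℓ) := by
      calc Pv * ℓ ≤ Pv * (v * Qv + (T1 + 2 * T2)) := Nat.mul_le_mul_left _ honeF
        _ = Pv * (v * Qv) + (Pv * T1 + 2 * (Pv * T2)) := by ring
        _ ≤ Pv * (v * Qv) + (S1 + 2 * S2) := by
            have := Nat.mul_le_mul_left 2 hT2
            omega
        _ ≤ Pv * (v * Qv) + 3 * (A * ℓ) := by omega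
    have hll : ℓ * ℓ ≤ ℓ * (v * Qv + (2541 * A ^ 2 + 33 * A)) := by
      calc ℓ * ℓ ≤ (v * Pv + 2541 * A ^ 2) * ℓ := Nat.mul_le_mul_right _ hP2
        _ = v * (Pv * ℓ) + 2541 * A ^ 2 * ℓ := by ring
        _ ≤ v * (Pv * (v * Qv) + 3 * (A * ℓ)) + 2541 * A ^ 2 * ℓ := by
            exact Nat.add_le_add_right (Nat.mul_le_mul_left _ hPl) _
        _ = (v * Pv) * (v * Qv) + v * (3 * (A * ℓ)) + 2541 * A ^ 2 * ℓ := by ring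
        _ ≤ ℓ * (v * Qv) + v * (3 * (A * ℓ)) + 2541 * A ^ 2 * ℓ := by
            exact Nat.add_le_add_right (Nat.add_le_add_right (Nat.mul_le_mul_right _ hvP) _) _
        _ ≤ ℓ * (v * Qv) + 11 * (3 * (A * ℓ)) + 2541 * A ^ 2 * ℓ := by
            have : v * (3 * (A * ℓ)) ≤ 11 * (3 * (A * ℓ)) := Nat.mul_le_mul_right _ hv11
            omega
        _ = ℓ * (v * Qv + (2541 * A ^ 2 + 33 * A)) := by ring
    exact Nat.le_of_mul_le_mul_left hll hl0
  have hP2' : ℓ ≤ v * Pv + (2541 * A ^ 2 + 33 * A) := by omega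
  -- STEP 3b : v ≤ 6
  have hv6 : v ≤ 6 := by
    by_contra hv7
    push_neg at hv7
    have hk4 : 4 ≤ k₀ := by omega
    have hkv : k₀ < v := by omega
    have hgk : Nat.gcd k₀ v ∣ k₀ := Nat.gcd_dvd_left _ _
    have hgkle : Nat.gcd k₀ v ≤ k₀ := Nat.le_of_dvd (by omega) hgk
    have h2g : 2 * Nat.gcd k₀ v ≤ k₀ := by
      rcases eq_or_ne (Nat.gcd k₀ v) k₀ with h | h
      · exfalso
        have hdv : k₀ ∣ v := h ▸ Nat.gcd_dvd_right k₀ v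
        obtain ⟨c, hc⟩ := hdv
        have hc2 : 2 ≤ c := by
          rcases Nat.lt_or_ge c 2 with hc' | hc'
          · interval_cases c <;> omega
          · exact hc'
        have : 2 * k₀ ≤ v := by
          calc 2 * k₀ = k₀ * 2 := by ring
            _ ≤ k₀ * c := Nat.mul_le_mul_left _ hc2
            _ = v := hc.symm
        omega
      · have hg0 : 0 < Nat.gcd k₀ v := Nat.gcd_pos_of_pos_left v (by omega)
        obtain ⟨d, hd⟩ := hgk
        have hd2 : 2 ≤ d := by
          rcases Nat.lt_or_ge d 2 with hd' | hd'
          · interval_cases d <;> omega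
          · exact hd'
        calc 2 * Nat.gcd k₀ v = Nat.gcd k₀ v * 2 := by ring
          _ ≤ Nat.gcd k₀ v * d := Nat.mul_le_mul_left _ hd2
          _ = k₀ := hd.symm
    have hx : (univ.filter fun i => e i = k₀).card * (Qv * (k₀ - Nat.gcd k₀ v)) ≤ S1 :=
      extract2 e f k₀ v
    have hkg : k₀ ≤ 2 * (k₀ - Nat.gcd k₀ v) := by omega
    have hfin : A * ((k₀ + 1) * k₀) * ℓ ≤ 2 * v * (A * ℓ) + A * ((k₀ + 1) * k₀) * (2541 * A ^ 2 + 33 * A) := by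
      calc A * ((k₀ + 1) * k₀) * ℓ
          ≤ A * ((k₀ + 1) * k₀) * (v * Qv + (2541 * A ^ 2 + 33 * A)) :=
            Nat.mul_le_mul_left _ hQ2
        _ = A * (k₀ + 1) * (v * (Qv * k₀)) + A * ((k₀ + 1) * k₀) * (2541 * A ^ 2 + 33 * A) := by
            ring
        _ ≤ A * (k₀ + 1) * (v * (Qv * (2 * (k₀ - Nat.gcd k₀ v))))
              + A * ((k₀ + 1) * k₀) * (2541 * A ^ 2 + 33 * A) := by
            refine Nat.add_le_add_right (Nat.mul_le_mul_left _ (Nat.mul_le_mul_left _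
              (Nat.mul_le_mul_left _ hkg))) _
        _ = 2 * v * ((A * (k₀ + 1)) * (Qv * (k₀ - Nat.gcd k₀ v)))
              + A * ((k₀ + 1) * k₀) * (2541 * A ^ 2 + 33 * A) := by ring
        _ ≤ 2 * v * ((univ.filter fun i => e i = k₀).card * (Qv * (k₀ - Nat.gcd k₀ v)))
              + A * ((k₀ + 1) * k₀) * (2541 * A ^ 2 + 33 * A) := by
            refine Nat.add_le_add_right (Nat.mul_le_mul_left _ (Nat.mul_le_mul_right _ (by omega))) _
        _ ≤ 2 * v * S1 + A * ((k₀ + 1) * k₀) * (2541 * A ^ 2 + 33 * A) := by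
            refine Nat.add_le_add_right (Nat.mul_le_mul_left _ hx) _
        _ ≤ 2 * v * (A * ℓ) + A * ((k₀ + 1) * k₀) * (2541 * A ^ 2 + 33 * A) := by
            refine Nat.add_le_add_right (Nat.mul_le_mul_left _ hS1l) _
    have h44 : (4 * k₀ + 4) ≤ (k₀ + 1) * k₀ := by
      calc 4 * k₀ + 4 = (k₀ + 1) * 4 := by ring
        _ ≤ (k₀ + 1) * k₀ := Nat.mul_le_mul_left _ hk4
    have h42 : (k₀ + 1) * k₀ ≤ 42 := by
      calc (k₀ + 1) * k₀ ≤ 7 * 6 := Nat.mul_le_mul (by omega) hk6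
        _ = 42 := by norm_num
    have hvk : 2 * v + 2 ≤ 4 * k₀ := by omega
    have hbig1 : (4 * k₀ + 4) * (A * ℓ) ≤ A * ((k₀ + 1) * k₀) * ℓ := by
      calc (4 * k₀ + 4) * (A * ℓ) ≤ ((k₀ + 1) * k₀) * (A * ℓ) := Nat.mul_le_mul_right _ h44
        _ = A * ((k₀ + 1) * k₀) * ℓ := by ring
    have hbig2 : 2 * v * (A * ℓ) + 2 * (A * ℓ) ≤ 4 * k₀ * (A * ℓ) := by
      calc 2 * v * (A * ℓ) + 2 * (A * ℓ) = (2 * v + 2) * (A * ℓ) := by ring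
        _ ≤ 4 * k₀ * (A * ℓ) := Nat.mul_le_mul_right _ hvk
    have hbig3 : A * ((k₀ + 1) * k₀) * (2541 * A ^ 2 + 33 * A) ≤ 42 * (A * (2541 * A ^ 2 + 33 * A)) := by
      calc A * ((k₀ + 1) * k₀) * (2541 * A ^ 2 + 33 * A)
          = ((k₀ + 1) * k₀) * (A * (2541 * A ^ 2 + 33 * A)) := by ring
        _ ≤ 42 * (A * (2541 * A ^ 2 + 33 * A)) := Nat.mul_le_mul_right _ h42
    have h6 : 6 * (A * ℓ) ≤ 42 * (A * (2541 * A ^ 2 + 33 * A)) := by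
      have e1 : (4 * k₀ + 4) * (A * ℓ) = 4 * k₀ * (A * ℓ) + 4 * (A * ℓ) := by ring
      omega
    have h7 : A * ℓ ≤ A * (7 * (2541 * A ^ 2 + 33 * A)) := by
      have : 6 * (A * ℓ) ≤ 6 * (A * (7 * (2541 * A ^ 2 + 33 * A))) := by
        calc 6 * (A * ℓ) ≤ 42 * (A * (2541 * A ^ 2 + 33 * A)) := h6
          _ = 6 * (A * (7 * (2541 * A ^ 2 + 33 * A))) := by ring
      omega
    have h8 : ℓ ≤ 7 * (2541 * A ^ 2 + 33 * A) := Nat.le_of_mul_le_mul_left h7 hA0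
    have hA2 : A ^ 2 ≤ A ^ 3 := Nat.pow_le_pow_right (by omega) (by omega)
    have hAA : A ≤ A ^ 3 := Nat.le_self_pow (by omega) A
    linarith
  -- STEP 4 : sharpen to the final bounds
  have hC2L : (2541 * A ^ 2 + 33 * A) * (A * v + 1) < ℓ := by
    have b1 : A * v ≤ 6 * A := by
      calc A * v ≤ A * 6 := Nat.mul_le_mul_left _ hv6
        _ = 6 * A := by ring
    have b2 : (2541 * A ^ 2 + 33 * A) * (A * v + 1) ≤ (2541 * A ^ 2 + 33 * A) * (6 * A + 1) :=
      Nat.mul_le_mul_left _ (by omega)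
    have heq : (2541 * A ^ 2 + 33 * A) * (6 * A + 1) = 15246 * A ^ 3 + 2739 * A ^ 2 + 33 * A := by
      ring
    have hA2 : A ^ 2 ≤ A ^ 3 := Nat.pow_le_pow_right (by omega) (by omega)
    have hAA : A ≤ A ^ 3 := Nat.le_self_pow (by omega) A
    linarith
  have hT1b : T1 ≤ A * v := stepT A ℓ v _ Pv T1 S1 hP2' hT1 hS1 hC2L
  have hT2b : T2 ≤ A * v := stepT A ℓ v _ Pv T2 S2 hP2' hT2 hS2 hC2L
  have hU1b : U1 ≤ A * v := stepT A ℓ v _ Qv U1 S2 hQ2 hU1 hS2 hC2L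
  have hU2b : U2 ≤ A * v := stepT A ℓ v _ Qv U2 S1 hQ2 hU2 hS1 hC2L
  refine ⟨v, hv1, hv6, ?_, ?_⟩
  · -- e side
    rw [← hPvd]
    rcases eq_or_ne v 1 with hv | hv
    · subst hv
      have hU1z : U1 = 0 := by
        rw [hU1d]; simp [Nat.gcd_one_left]
      have : ℓ ≤ Pv + 2 * A := by omega
      omega
    · have hv2 : 2 ≤ v := by omega
      have h12 : 12 ≤ (v + 1) * (v + 2) := by
        calc (12 : ℕ) = 3 * 4 := by norm_num
          _ ≤ (v + 1) * (v + 2) := Nat.mul_le_mul (by omega) (by omega)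
      have h9 : 9 * (A * v) ≤ A * (v * (v + 1) * (v + 2)) := by
        calc 9 * (A * v) = A * (v * 9) := by ring
          _ ≤ A * (v * ((v + 1) * (v + 2))) :=
            Nat.mul_le_mul_left _ (Nat.mul_le_mul_left _ (by omega))
          _ = A * (v * (v + 1) * (v + 2)) := by ring
      have : ℓ ≤ v * Pv + 3 * (A * v) := by omega
      omega
  · -- f side
    rw [← hQvd]
    rcases eq_or_ne v 1 with hv | hv
    · subst hv
      have hT1z : T1 = 0 := by
        rw [hT1d]; simp [Nat.gcd_one_left]
      have : ℓ ≤ Qv + 2 * A := by omega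
      omega
    · have hv2 : 2 ≤ v := by omega
      have h12 : 12 ≤ (v + 1) * (v + 2) := by
        calc (12 : ℕ) = 3 * 4 := by norm_num
          _ ≤ (v + 1) * (v + 2) := Nat.mul_le_mul (by omega) (by omega)
      have h9 : 9 * (A * v) ≤ A * (v * (v + 1) * (v + 2)) := by
        calc 9 * (A * v) = A * (v * 9) := by ring
          _ ≤ A * (v * ((v + 1) * (v + 2))) :=
            Nat.mul_le_mul_left _ (Nat.mul_le_mul_left _ (by omega))
          _ = A * (v * (v + 1) * (v + 2)) := by ring
      have : ℓ ≤ v * Qv + 3 * (A * v) := by omega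
      omega

/-- **Proposition 4.1 (arithmetic form)**: for every positive integer `α` there is a
constant `L(α)` such that whenever `ℓ ≥ L(α)` and `e₁,…,e_n`, `f₁,…,f_m` are positive
integers each summing to `ℓ` with
`Σᵢ Σⱼ (eᵢ − gcd(eᵢ,fⱼ)) ≤ 2(α+1)ℓ − 2` and `Σᵢ Σⱼ (fⱼ − gcd(eᵢ,fⱼ)) ≤ 2(α+1)ℓ − 2`,
then either (a) for some `k ≤ 6` both the `e`'s and the `f`'s contain at least
`ℓ/k − 2(α+1)(k+1) − (2/3)(α+1)(k²−1)` entries equal to `k`, or (b) for every `k ≤ 6`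
both contain at most `2(α+1)(k+1)` entries equal to `k`. -/
theorem statement4 (α : ℕ) (hα : 0 < α) :
    ∃ L : ℕ, 0 < L ∧
      ∀ (ℓ n m : ℕ) (e : Fin n → ℕ) (f : Fin m → ℕ),
        L ≤ ℓ →
        (∀ i, 0 < e i) → (∀ j, 0 < f j) →
        (∑ i, e i = ℓ) → (∑ j, f j = ℓ) →
        (∑ i, ∑ j, ((e i : ℝ) - (Nat.gcd (e i) (f j) : ℝ)) ≤ 2 * ((α : ℝ) + 1) * (ℓ : ℝ) - 2) →
        (∑ i, ∑ j, ((f j : ℝ) - (Nat.gcd (e i) (f j) : ℝ)) ≤ 2 * ((α : ℝ) + 1) * (ℓ : ℝ) - 2) →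
        ((∃ k : ℕ, 1 ≤ k ∧ k ≤ 6 ∧
            ((ℓ : ℝ) / (k : ℝ) - 2 * ((α : ℝ) + 1) * ((k : ℝ) + 1)
                - 2 / 3 * ((α : ℝ) + 1) * ((k : ℝ) ^ 2 - 1)
              ≤ ((univ.filter fun i => e i = k).card : ℝ)) ∧
            ((ℓ : ℝ) / (k : ℝ) - 2 * ((α : ℝ) + 1) * ((k : ℝ) + 1)
                - 2 / 3 * ((α : ℝ) + 1) * ((k : ℝ) ^ 2 - 1)
              ≤ ((univ.filter fun j => f j = k).card : ℝ))) ∨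
          (∀ k : ℕ, 1 ≤ k → k ≤ 6 →
            (univ.filter fun i => e i = k).card ≤ 2 * (α + 1) * (k + 1) ∧
            (univ.filter fun j => f j = k).card ≤ 2 * (α + 1) * (k + 1))) := by
  classical
  refine ⟨100000 * (2 * (α + 1)) ^ 3, by positivity, ?_⟩
  intro ℓ n m e f hL he hf hse hsf h1 h2
  set A := 2 * (α + 1) with hAd
  have hA : 4 ≤ A := by omega
  -- convert the real hypotheses to ℕ
  have hcast1 : ((∑ i, ∑ j, (e i - Nat.gcd (e i) (f j)) : ℕ) : ℝ)
      = ∑ i, ∑ j, ((e i : ℝ) - (Nat.gcd (e i) (f j) : ℝ)) := by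
    push_cast
    exact Finset.sum_congr rfl fun i _ => Finset.sum_congr rfl fun j _ =>
      Nat.cast_sub (Nat.gcd_le_left _ (he i))
  have hcast2 : ((∑ i, ∑ j, (f j - Nat.gcd (e i) (f j)) : ℕ) : ℝ)
      = ∑ i, ∑ j, ((f j : ℝ) - (Nat.gcd (e i) (f j) : ℝ)) := by
    push_cast
    exact Finset.sum_congr rfl fun i _ => Finset.sum_congr rfl fun j _ =>
      Nat.cast_sub (Nat.gcd_le_right _ (hf j))
  have hS1 : (∑ i, ∑ j, (e i - Nat.gcd (e i) (f j))) + 2 ≤ A * ℓ := by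
    have : ((∑ i, ∑ j, (e i - Nat.gcd (e i) (f j)) : ℕ) : ℝ) + 2 ≤ (A : ℝ) * ℓ := by
      rw [hcast1]
      have : (A : ℝ) = 2 * ((α : ℝ) + 1) := by rw [hAd]; push_cast; ring
      rw [this]
      linarith
    exact_mod_cast this
  have hS2 : (∑ i, ∑ j, (f j - Nat.gcd (e i) (f j))) + 2 ≤ A * ℓ := by
    have : ((∑ i, ∑ j, (f j - Nat.gcd (e i) (f j)) : ℕ) : ℝ) + 2 ≤ (A : ℝ) * ℓ := by
      rw [hcast2]
      have : (A : ℝ) = 2 * ((α : ℝ) + 1) := by rw [hAd]; push_cast; ring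
      rw [this]
      linarith
    exact_mod_cast this
  by_cases hb : ∀ k : ℕ, 1 ≤ k → k ≤ 6 →
      (univ.filter fun i => e i = k).card ≤ 2 * (α + 1) * (k + 1) ∧
      (univ.filter fun j => f j = k).card ≤ 2 * (α + 1) * (k + 1)
  · exact Or.inr hb
  · left
    push_neg at hb
    obtain ⟨k₀, hk1, hk6, hcase⟩ := hb
    -- get the existence of v with the nat bounds, from one of the two symmetric cases
    have key : ∃ v, 1 ≤ v ∧ v ≤ 6 ∧
        3 * ℓ ≤ 3 * (v * (univ.filter fun i => e i = v).card) + A * (v * (v + 1) * (v + 2)) ∧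
        3 * ℓ ≤ 3 * (v * (univ.filter fun j => f j = v).card) + A * (v * (v + 1) * (v + 2)) := by
      rcases le_or_gt (univ.filter fun i => e i = k₀).card (2 * (α + 1) * (k₀ + 1)) with hE | hE
      · -- then the f-side count is big; apply the lemma with roles swapped
        have hF := hcase hE
        have hswap1 : (∑ j, ∑ i, (e i - Nat.gcd (f j) (e i)))
            = ∑ i, ∑ j, (e i - Nat.gcd (e i) (f j)) := by
          rw [Finset.sum_comm]
          exact Finset.sum_congr rfl fun i _ => Finset.sum_congr rfl fun j _ => by
            rw [Nat.gcd_comm]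
        have hswap2 : (∑ j, ∑ i, (f j - Nat.gcd (f j) (e i)))
            = ∑ i, ∑ j, (f j - Nat.gcd (e i) (f j)) := by
          rw [Finset.sum_comm]
          exact Finset.sum_congr rfl fun i _ => Finset.sum_congr rfl fun j _ => by
            rw [Nat.gcd_comm]
        obtain ⟨v, hv1, hv6, hQ, hP⟩ := main_lemma A ℓ f e hA hL hf he hsf hse
          (by rw [hswap2]; exact hS2) (by rw [hswap1]; exact hS1) k₀ hk1 hk6 (by rw [hAd]; omega)
        exact ⟨v, hv1, hv6, hP, hQ⟩
      · exact main_lemma A ℓ e f hA hL he hf hse hsf hS1 hS2 k₀ hk1 hk6 (by rw [hAd]; omega)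
    obtain ⟨v, hv1, hv6, hP, hQ⟩ := key
    have hv0 : (0 : ℝ) < (v : ℝ) := by exact_mod_cast hv1
    refine ⟨v, hv1, hv6, ?_, ?_⟩
    · have hc : (3 : ℝ) * ℓ ≤ 3 * ((v : ℝ) * ((univ.filter fun i => e i = v).card : ℝ))
          + (2 * ((α : ℝ) + 1)) * ((v : ℝ) * ((v : ℝ) + 1) * ((v : ℝ) + 2)) := by
        have := hP
        have h' : ((3 * ℓ : ℕ) : ℝ) ≤ ((3 * (v * (univ.filter fun i => e i = v).card)
            + A * (v * (v + 1) * (v + 2)) : ℕ) : ℝ) := by exact_mod_cast this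
        push_cast at h'
        rw [hAd] at h'
        push_cast at h'
        linarith
      rw [sub_sub, sub_le_iff_le_add, div_le_iff₀ hv0]
      nlinarith [hc]
    · have hc : (3 : ℝ) * ℓ ≤ 3 * ((v : ℝ) * ((univ.filter fun j => f j = v).card : ℝ))
          + (2 * ((α : ℝ) + 1)) * ((v : ℝ) * ((v : ℝ) + 1) * ((v : ℝ) + 2)) := by
        have := hQ
        have h' : ((3 * ℓ : ℕ) : ℝ) ≤ ((3 * (v * (univ.filter fun j => f j = v).card)
            + A * (v * (v + 1) * (v + 2)) : ℕ) : ℝ) := by exact_mod_cast this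
        push_cast at h'
        rw [hAd] at h'
        push_cast at h'
        linarith
      rw [sub_sub, sub_le_iff_le_add, div_le_iff₀ hv0]
      nlinarith [hc]
end

section
/- Let ℓ, u, v be positive integers with u ≤ v, and let r₁,…,r_u and s₁,…,s_v be positive integers with r₁+⋯+r_u = ℓ and s₁+⋯+s_v = ℓ. Set S := Σ_{i=1}^{u} Σ_{j=1}^{v} (r_i + s_j − 2·gcd(r_i,s_j)). Then S ≥ ℓ(v − u). -/
/-!
Expanding the double sum gives `S = vℓ + uℓ - 2 Σᵢ Σⱼ gcd(rᵢ, sⱼ)`, and bounding each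
`gcd(rᵢ, sⱼ)` by `sⱼ` gives `Σᵢ Σⱼ gcd(rᵢ, sⱼ) ≤ uℓ`.
-/

open Finset

section

variable {ι κ : Type*} [Fintype ι] [Fintype κ]

theorem sum_sum_add_sub_two_mul (a : ι → ℤ) (b : κ → ℤ) (c : ι → κ → ℤ) :
    ∑ i, ∑ j, (a i + b j - 2 * c i j) =
      Fintype.card κ * ∑ i, a i + Fintype.card ι * ∑ j, b j - 2 * ∑ i, ∑ j, c i j := by
  simp only [sum_sub_distrib, sum_add_distrib, sum_const, card_univ, nsmul_eq_mul, ← mul_sum]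

theorem sum_sum_gcd_le_card_mul_sum (r : ι → ℕ) (s : κ → ℕ) (hs : ∀ j, 0 < s j) :
    ∑ i, ∑ j, Nat.gcd (r i) (s j) ≤ Fintype.card ι * ∑ j, s j :=
  calc ∑ i, ∑ j, Nat.gcd (r i) (s j)
      ≤ ∑ _i : ι, ∑ j, s j :=
        sum_le_sum fun _ _ => sum_le_sum fun j _ => Nat.gcd_le_right _ (hs j)
    _ = Fintype.card ι * ∑ j, s j := by rw [sum_const, card_univ, smul_eq_mul]

end

theorem statement5_general (ℓ u v : ℕ)
    (r : Fin u → ℕ) (s : Fin v → ℕ)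
    (hs : ∀ j, 0 < s j)
    (hrsum : ∑ i, r i = ℓ) (hssum : ∑ j, s j = ℓ) :
    (ℓ : ℤ) * ((v : ℤ) - (u : ℤ)) ≤
      ∑ i, ∑ j, ((r i : ℤ) + (s j : ℤ) - 2 * (Nat.gcd (r i) (s j) : ℤ)) := by
  have hgcd : ∑ i, ∑ j, (Nat.gcd (r i) (s j) : ℤ) ≤ u * ℓ := by
    have := sum_sum_gcd_le_card_mul_sum r s hs
    rw [Fintype.card_fin, hssum] at this
    exact_mod_cast this
  have hrsum' : ∑ i, (r i : ℤ) = ℓ := by exact_mod_cast hrsum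
  have hssum' : ∑ j, (s j : ℤ) = ℓ := by exact_mod_cast hssum
  rw [sum_sum_add_sub_two_mul, Fintype.card_fin, Fintype.card_fin, hrsum', hssum']
  linarith

/-- **Lemma 2.13(1)**: if `r₁ + ⋯ + r_u = ℓ = s₁ + ⋯ + s_v` with all terms positive and
`u ≤ v`, then `S := Σᵢ Σⱼ (rᵢ + sⱼ − 2·gcd(rᵢ,sⱼ))` satisfies `S ≥ ℓ(v − u)`. -/
theorem statement5 (ℓ u v : ℕ) (hℓ : 0 < ℓ) (hu : 0 < u) (hv : 0 < v) (huv : u ≤ v)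
    (r : Fin u → ℕ) (s : Fin v → ℕ)
    (hr : ∀ i, 0 < r i) (hs : ∀ j, 0 < s j)
    (hrsum : ∑ i, r i = ℓ) (hssum : ∑ j, s j = ℓ) :
    (ℓ : ℤ) * ((v : ℤ) - (u : ℤ)) ≤
      ∑ i, ∑ j, ((r i : ℤ) + (s j : ℤ) - 2 * (Nat.gcd (r i) (s j) : ℤ)) :=
  statement5_general ℓ u v r s hs hrsum hssum
end

section
/- Let ℓ be a positive integer and let r₁, r₂, s₁, s₂ be positive integers with r₁ + r₂ = ℓ and s₁ + s₂ = ℓ, such that r_i ≠ s_j for all i, j ∈ {1,2} and gcd(r₁,r₂,s₁,s₂) = 1. Set S := Σ_{i=1}^{2} Σ_{j=1}^{2} (r_i + s_j − 2·gcd(r_i,s_j)). Then S > 5ℓ/2 − 5, i.e. 2S > 5ℓ − 10. -/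
/-!
Write `gᵢⱼ = gcd(rᵢ, sⱼ)` and note `S = 4ℓ - 2 Σ gᵢⱼ`, so the claim is `4 Σ gᵢⱼ ≤ 3ℓ + 9`.
Since `r₁ + r₂ = s₁ + s₂`, a common divisor of two of the `gᵢⱼ` divides three of the four
numbers and hence all of them, so the `gᵢⱼ` are pairwise coprime. Therefore the product of two
gcds in one row (column) is at most `rᵢ` (`sⱼ`), and the product of two diagonal gcds divides
`r₁ - s₁ = s₂ - r₂` (resp. `r₁ - s₂ = s₁ - r₂`), which is nonzero. Splitting according to which
`gᵢⱼ` equal `1`, these bounds together with `2x + 2y ≤ xy + 4` for `x, y ≥ 2` give the claim.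
-/

lemma two_mul_add_two_mul_le_of_mul_le {x y B : ℕ} (h : x * y ≤ B) (hx : 2 ≤ x) (hy : 2 ≤ y) :
    2 * x + 2 * y ≤ B + 4 := by
  nlinarith

lemma four_mul_sum_le_of_mul_le {ℓ r₁ r₂ s₁ s₂ g₁₁ g₁₂ g₂₁ g₂₂ : ℕ}
    (h₁₁ : 0 < g₁₁) (h₁₂ : 0 < g₁₂) (h₂₁ : 0 < g₂₁) (h₂₂ : 0 < g₂₂)
    (hr : r₁ + r₂ = ℓ) (hs : s₁ + s₂ = ℓ)
    (hr₁ : g₁₁ * g₁₂ ≤ r₁) (hr₂ : g₂₁ * g₂₂ ≤ r₂) (hs₁ : g₁₁ * g₂₁ ≤ s₁) (hs₂ : g₁₂ * g₂₂ ≤ s₂)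
    (hd : g₁₁ * g₂₂ + s₁ ≤ r₁ ∨ g₁₁ * g₂₂ + r₁ ≤ s₁)
    (hd' : g₁₂ * g₂₁ + s₂ ≤ r₁ ∨ g₁₂ * g₂₁ + r₁ ≤ s₂) :
    4 * (g₁₁ + g₁₂ + g₂₁ + g₂₂) ≤ 3 * ℓ + 9 := by
  have := two_mul_add_two_mul_le_of_mul_le hr₁
  have := two_mul_add_two_mul_le_of_mul_le hr₂
  have := two_mul_add_two_mul_le_of_mul_le hs₁
  have := two_mul_add_two_mul_le_of_mul_le hs₂
  have := two_mul_add_two_mul_le_of_mul_le (le_refl (g₁₁ * g₂₂))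
  have := two_mul_add_two_mul_le_of_mul_le (le_refl (g₁₂ * g₂₁))
  rcases (by omega : g₁₁ = 1 ∨ 2 ≤ g₁₁) with rfl | _ <;>
  rcases (by omega : g₁₂ = 1 ∨ 2 ≤ g₁₂) with rfl | _ <;>
  rcases (by omega : g₂₁ = 1 ∨ 2 ≤ g₂₁) with rfl | _ <;>
  rcases (by omega : g₂₂ = 1 ∨ 2 ≤ g₂₂) with rfl | _ <;>
  -- dropping the pair bounds made vacuous by `2 ≤ 1` spares `omega` a case split on each of them
  simp -failIfUnchanged only [one_mul, mul_one, Nat.not_ofNat_le_one, IsEmpty.forall_iff] at * <;>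
  omega

section GcdMatrix

variable {r r' s s' : ℕ}

lemma eq_one_of_dvd_of_gcd_gcd_eq_one (hgcd : Nat.gcd (Nat.gcd r r') (Nat.gcd s s') = 1)
    {d : ℕ} (hr : d ∣ r) (hr' : d ∣ r') (hs : d ∣ s) (hs' : d ∣ s') : d = 1 :=
  Nat.dvd_one.mp (hgcd ▸ Nat.dvd_gcd (Nat.dvd_gcd hr hr') (Nat.dvd_gcd hs hs'))

lemma gcd_mul_gcd_le (hsum : r + r' = s + s') (hgcd : Nat.gcd (Nat.gcd r r') (Nat.gcd s s') = 1)
    (hr : 0 < r) : Nat.gcd r s * Nat.gcd r s' ≤ r := by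
  set d := Nat.gcd (Nat.gcd r s) (Nat.gcd r s')
  have hdr : d ∣ r := (Nat.gcd_dvd_left _ _).trans (Nat.gcd_dvd_left _ _)
  have hds : d ∣ s := (Nat.gcd_dvd_left _ _).trans (Nat.gcd_dvd_right _ _)
  have hds' : d ∣ s' := (Nat.gcd_dvd_right _ _).trans (Nat.gcd_dvd_right _ _)
  have hdr' : d ∣ r' := (Nat.dvd_add_right hdr).mp (hsum ▸ dvd_add hds hds')
  have hcop : Nat.Coprime (Nat.gcd r s) (Nat.gcd r s') :=
    eq_one_of_dvd_of_gcd_gcd_eq_one hgcd hdr hdr' hds hds'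
  exact Nat.le_of_dvd hr (hcop.mul_dvd_of_dvd_of_dvd (Nat.gcd_dvd_left _ _) (Nat.gcd_dvd_left _ _))

lemma gcd_mul_gcd_add_le_or (hsum : r + r' = s + s')
    (hgcd : Nat.gcd (Nat.gcd r r') (Nat.gcd s s') = 1) (hne : r ≠ s) :
    Nat.gcd r s * Nat.gcd r' s' + s ≤ r ∨ Nat.gcd r s * Nat.gcd r' s' + r ≤ s := by
  have hcop : Nat.Coprime (Nat.gcd r s) (Nat.gcd r' s') :=
    eq_one_of_dvd_of_gcd_gcd_eq_one hgcd
      ((Nat.gcd_dvd_left _ _).trans (Nat.gcd_dvd_left _ _))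
      ((Nat.gcd_dvd_right _ _).trans (Nat.gcd_dvd_left _ _))
      ((Nat.gcd_dvd_left _ _).trans (Nat.gcd_dvd_right _ _))
      ((Nat.gcd_dvd_right _ _).trans (Nat.gcd_dvd_right _ _))
  have h : (Nat.gcd r s : ℤ) ∣ r - s :=
    dvd_sub (Int.natCast_dvd_natCast.mpr (Nat.gcd_dvd_left _ _))
      (Int.natCast_dvd_natCast.mpr (Nat.gcd_dvd_right _ _))
  have h' : (Nat.gcd r' s' : ℤ) ∣ r - s := by
    rw [show (r : ℤ) - s = s' - r' by omega]
    exact dvd_sub (Int.natCast_dvd_natCast.mpr (Nat.gcd_dvd_right _ _))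
      (Int.natCast_dvd_natCast.mpr (Nat.gcd_dvd_left _ _))
  have hle := Int.natAbs_le_of_dvd_ne_zero (hcop.isCoprime.mul_dvd h h') (by omega)
  rw [Int.natAbs_mul, Int.natAbs_natCast, Int.natAbs_natCast] at hle
  omega

end GcdMatrix

theorem statement7_general (ℓ r₁ r₂ s₁ s₂ : ℕ)
    (hr₁ : 0 < r₁) (hr₂ : 0 < r₂) (hs₁ : 0 < s₁) (hs₂ : 0 < s₂)
    (hrsum : r₁ + r₂ = ℓ) (hssum : s₁ + s₂ = ℓ)
    (h11 : r₁ ≠ s₁) (h12 : r₁ ≠ s₂)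
    (hgcd : Nat.gcd (Nat.gcd r₁ r₂) (Nat.gcd s₁ s₂) = 1) :
    5 * (ℓ : ℤ) - 10 <
      2 * (((r₁ : ℤ) + (s₁ : ℤ) - 2 * (Nat.gcd r₁ s₁ : ℤ))
        + ((r₁ : ℤ) + (s₂ : ℤ) - 2 * (Nat.gcd r₁ s₂ : ℤ))
        + ((r₂ : ℤ) + (s₁ : ℤ) - 2 * (Nat.gcd r₂ s₁ : ℤ))
        + ((r₂ : ℤ) + (s₂ : ℤ) - 2 * (Nat.gcd r₂ s₂ : ℤ))) := by
  have hsum : r₁ + r₂ = s₁ + s₂ := by omega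
  have hgcd₂₁ : Nat.gcd (Nat.gcd r₂ r₁) (Nat.gcd s₁ s₂) = 1 := by rwa [Nat.gcd_comm r₂]
  have hgcd₁₂ : Nat.gcd (Nat.gcd r₁ r₂) (Nat.gcd s₂ s₁) = 1 := by rwa [Nat.gcd_comm s₂]
  have hrow₁ := gcd_mul_gcd_le hsum hgcd hr₁
  have hrow₂ := gcd_mul_gcd_le (show r₂ + r₁ = s₁ + s₂ by omega) hgcd₂₁ hr₂
  have hcol₁ := gcd_mul_gcd_le hsum.symm (by rwa [Nat.gcd_comm]) hs₁
  have hcol₂ := gcd_mul_gcd_le (show s₂ + s₁ = r₁ + r₂ by omega) (by rwa [Nat.gcd_comm]) hs₂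
  rw [Nat.gcd_comm s₁ r₁, Nat.gcd_comm s₁ r₂] at hcol₁
  rw [Nat.gcd_comm s₂ r₁, Nat.gcd_comm s₂ r₂] at hcol₂
  have hdiag := gcd_mul_gcd_add_le_or hsum hgcd h11
  have hanti := gcd_mul_gcd_add_le_or (show r₁ + r₂ = s₂ + s₁ by omega) hgcd₁₂ h12
  have := four_mul_sum_le_of_mul_le (Nat.gcd_pos_of_pos_left s₁ hr₁)
    (Nat.gcd_pos_of_pos_left s₂ hr₁) (Nat.gcd_pos_of_pos_left s₁ hr₂)
    (Nat.gcd_pos_of_pos_left s₂ hr₂) hrsum hssum hrow₁ hrow₂ hcol₁ hcol₂ hdiag hanti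
  omega

/-- **Lemma 2.13(3)**: if `r₁ + r₂ = ℓ = s₁ + s₂` with all four positive integers
satisfying `rᵢ ≠ sⱼ` for all `i,j` and `gcd(r₁,r₂,s₁,s₂) = 1`, then
`S := Σᵢ Σⱼ (rᵢ + sⱼ − 2·gcd(rᵢ,sⱼ))` satisfies `S > 5ℓ/2 − 5`, i.e. `2S > 5ℓ − 10`. -/
theorem statement7 (ℓ r₁ r₂ s₁ s₂ : ℕ) (hℓ : 0 < ℓ)
    (hr₁ : 0 < r₁) (hr₂ : 0 < r₂) (hs₁ : 0 < s₁) (hs₂ : 0 < s₂)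
    (hrsum : r₁ + r₂ = ℓ) (hssum : s₁ + s₂ = ℓ)
    (h11 : r₁ ≠ s₁) (h12 : r₁ ≠ s₂) (h21 : r₂ ≠ s₁) (h22 : r₂ ≠ s₂)
    (hgcd : Nat.gcd (Nat.gcd r₁ r₂) (Nat.gcd s₁ s₂) = 1) :
    5 * (ℓ : ℤ) - 10 <
      2 * (((r₁ : ℤ) + (s₁ : ℤ) - 2 * (Nat.gcd r₁ s₁ : ℤ))
        + ((r₁ : ℤ) + (s₂ : ℤ) - 2 * (Nat.gcd r₁ s₂ : ℤ))
        + ((r₂ : ℤ) + (s₁ : ℤ) - 2 * (Nat.gcd r₂ s₁ : ℤ))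
        + ((r₂ : ℤ) + (s₂ : ℤ) - 2 * (Nat.gcd r₂ s₂ : ℤ))) :=
  statement7_general ℓ r₁ r₂ s₁ s₂ hr₁ hr₂ hs₁ hs₂ hrsum hssum h11 h12 hgcd
end

section
/- Let ℓ ≥ 2 be an integer, let a, b ∈ Sym(ℓ) be ℓ-cycles and let c, d ∈ Sym(ℓ) be transpositions such that a·d·b·c = 1 in Sym(ℓ). Then there exists z ∈ Sym(ℓ) with z² = 1, z·a·z = b, and z·c·z = d. -/
open Equiv Equiv.Perm

private def Gfun (u t v ℓ : ℕ) : ℕ → ℕ := fun j =>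
  if j ≤ u then u - j
  else if j < t then u + t - j
  else if j ≤ v then t + v - j
  else v + ℓ - j

private lemma Gfun_lt {u t v ℓ : ℕ} (hu : u < t) (hv : t ≤ v) (hvl : v < ℓ)
    {j : ℕ} (hj : j < ℓ) : Gfun u t v ℓ j < ℓ := by
  unfold Gfun; split_ifs <;> omega

private lemma Gfun_invol {u t v ℓ : ℕ} (hu : u < t) (hv : t ≤ v) (hvl : v < ℓ)
    {j : ℕ} (hj : j < ℓ) : Gfun u t v ℓ (Gfun u t v ℓ j) = j := by
  unfold Gfun; split_ifs <;> omega

set_option maxHeartbeats 1000000 in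
private lemma keyArith (u t v ℓ j : ℕ) (hu : u < t) (hv : t ≤ v) (hvl : v < ℓ)
    (hj : j < ℓ) :
    (if (if (Gfun u t v ℓ (if Gfun u t v ℓ j + 1 < ℓ then Gfun u t v ℓ j + 1 else 0)) = u
          then v
          else if (Gfun u t v ℓ (if Gfun u t v ℓ j + 1 < ℓ then Gfun u t v ℓ j + 1 else 0)) = v
            then u
            else Gfun u t v ℓ (if Gfun u t v ℓ j + 1 < ℓ then Gfun u t v ℓ j + 1 else 0)) + 1 < ℓ
      then (if (Gfun u t v ℓ (if Gfun u t v ℓ j + 1 < ℓ then Gfun u t v ℓ j + 1 else 0)) = u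
          then v
          else if (Gfun u t v ℓ (if Gfun u t v ℓ j + 1 < ℓ then Gfun u t v ℓ j + 1 else 0)) = v
            then u
            else Gfun u t v ℓ (if Gfun u t v ℓ j + 1 < ℓ then Gfun u t v ℓ j + 1 else 0)) + 1
      else 0) = if j = 0 then t else if j = t then 0 else j := by
  obtain ⟨g1, hg1⟩ : ∃ g1, Gfun u t v ℓ j = g1 := ⟨_, rfl⟩
  have e1 : Gfun u t v ℓ j =
      (if j ≤ u then u - j else if j < t then u + t - j
       else if j ≤ v then t + v - j else v + ℓ - j) := rfl
  rw [hg1] at e1 ⊢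
  obtain ⟨f1, hf1⟩ : ∃ f1, (if g1 + 1 < ℓ then g1 + 1 else 0) = f1 := ⟨_, rfl⟩
  rw [hf1]
  obtain ⟨g2, hg2⟩ : ∃ g2, Gfun u t v ℓ f1 = g2 := ⟨_, rfl⟩
  have e2 : Gfun u t v ℓ f1 =
      (if f1 ≤ u then u - f1 else if f1 < t then u + t - f1
       else if f1 ≤ v then t + v - f1 else v + ℓ - f1) := rfl
  rw [hg2] at e2 ⊢
  split_ifs at e1 e2 hf1 ⊢ <;> omega

private lemma conj_transfer {α : Type*} [DecidableEq α] [Fintype α]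
    (σ a b c d : Perm α)
    (H : ∃ z, z ^ 2 = 1 ∧ z * (σ * a * σ⁻¹) * z = σ * b * σ⁻¹ ∧
      z * (σ * c * σ⁻¹) * z = σ * d * σ⁻¹) :
    ∃ z, z ^ 2 = 1 ∧ z * a * z = b ∧ z * c * z = d := by
  obtain ⟨z, h1, h2, h3⟩ := H
  refine ⟨σ⁻¹ * z * σ, ?_, ?_, ?_⟩
  · have e : σ⁻¹ * z * σ * (σ⁻¹ * z * σ) = σ⁻¹ * (z * z) * σ := by group
    rw [sq, e, ← sq, h1]
    group
  · have e : σ⁻¹ * z * σ * a * (σ⁻¹ * z * σ) = σ⁻¹ * (z * (σ * a * σ⁻¹) * z) * σ := by group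
    rw [e, h2]
    group
  · have e : σ⁻¹ * z * σ * c * (σ⁻¹ * z * σ) = σ⁻¹ * (z * (σ * c * σ⁻¹) * z) * σ := by group
    rw [e, h3]
    group

private lemma orbit_invariant {α : Type*} (f : Perm α) (P : α → Prop)
    (hP : ∀ x, P x → P (f x)) : ∀ (k : ℕ) (x), P x → P ((f ^ k) x) := by
  intro k
  induction k with
  | zero => simp
  | succ m ih =>
    intro x hx
    rw [pow_succ, Equiv.Perm.mul_apply]
    exact ih (f x) (hP x hx)

private lemma coreB (n : ℕ) (b : Perm (Fin (n + 2))) (x₀ y₀ U V : Fin (n + 2))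
    (hx₀ : x₀.val = 0) (hu : U.val < y₀.val) (hv : y₀.val ≤ V.val)
    (hre : ∀ w, finRotate (n + 2) (Equiv.swap U V (b w)) = Equiv.swap x₀ y₀ w) :
    ∃ z, z ^ 2 = 1 ∧ z * finRotate (n + 2) * z = b ∧
      z * Equiv.swap x₀ y₀ * z = Equiv.swap U V := by
  have htl : y₀.val < n + 2 := y₀.isLt
  have hvl : V.val < n + 2 := V.isLt
  have aval : ∀ w : Fin (n + 2), ((finRotate (n + 2)) w).val =
      if w.val + 1 < n + 2 then w.val + 1 else 0 := by
    intro w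
    rw [finRotate_succ_apply, Fin.val_add_one]
    rcases eq_or_ne w (Fin.last (n + 1)) with hw | hw
    · subst hw; simp [Fin.last]
    · rw [if_neg hw, if_pos]
      have h1 := w.isLt
      have h2 : w.val ≠ n + 1 := fun hh => hw (Fin.ext hh)
      omega
  have swapval : ∀ X Y w : Fin (n + 2), (Equiv.swap X Y w).val =
      if w.val = X.val then Y.val else if w.val = Y.val then X.val else w.val := by
    intro X Y w
    simp only [Equiv.swap_apply_def, Fin.val_eq_val, apply_ite Fin.val]
  have hinvol : Function.Involutive (fun j : Fin (n + 2) =>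
      (⟨Gfun U.val y₀.val V.val (n + 2) j.val, Gfun_lt hu hv hvl j.isLt⟩ : Fin (n + 2))) := by
    intro j
    apply Fin.ext
    exact Gfun_invol hu hv hvl j.isLt
  set z := hinvol.toPerm _ with hzdef
  have hzval : ∀ w : Fin (n + 2), (z w).val = Gfun U.val y₀.val V.val (n + 2) w.val :=
    fun w => rfl
  have hzz : z * z = 1 := by
    ext w
    simp only [Equiv.Perm.mul_apply, Equiv.Perm.one_apply]
    exact congrArg Fin.val (hinvol w)
  have hz2 : z ^ 2 = 1 := by rw [sq]; exact hzz
  have hzinv : z⁻¹ = z := inv_eq_of_mul_eq_one_right hzz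
  have hzx : z x₀ = U := by
    apply Fin.ext
    rw [hzval, hx₀]
    unfold Gfun; split_ifs <;> omega
  have hzy : z y₀ = V := by
    apply Fin.ext
    rw [hzval]
    unfold Gfun; split_ifs <;> omega
  have hzc : z * Equiv.swap x₀ y₀ * z = Equiv.swap U V := by
    calc z * Equiv.swap x₀ y₀ * z = z * Equiv.swap x₀ y₀ * z⁻¹ := by rw [hzinv]
      _ = Equiv.swap (z x₀) (z y₀) := (Equiv.swap_apply_apply z x₀ y₀).symm
      _ = Equiv.swap U V := by rw [hzx, hzy]
  have hE : ∀ w : Fin (n + 2),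
      finRotate (n + 2) (Equiv.swap U V (z (finRotate (n + 2) (z w)))) =
        Equiv.swap x₀ y₀ w := by
    intro w
    apply Fin.ext
    have e1 := hzval w
    have e2 := aval (z w)
    have e3 := hzval (finRotate (n + 2) (z w))
    have e4 := swapval U V (z (finRotate (n + 2) (z w)))
    have e5 := aval (Equiv.swap U V (z (finRotate (n + 2) (z w))))
    have e6 := swapval x₀ y₀ w
    rw [e5, e4, e3, e2, e1, e6, hx₀]
    exact keyArith U.val y₀.val V.val (n + 2) w.val hu hv hvl w.isLt
  have hbeq : z * finRotate (n + 2) * z = b := by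
    ext w
    have e3 : finRotate (n + 2) (Equiv.swap U V (b w)) =
        finRotate (n + 2) (Equiv.swap U V (z (finRotate (n + 2) (z w)))) :=
      (hre w).trans (hE w).symm
    have e4 := (Equiv.swap U V).injective ((finRotate (n + 2)).injective e3)
    simp only [Equiv.Perm.mul_apply]
    exact congrArg Fin.val e4.symm
  exact ⟨z, hz2, hbeq, hzc⟩

private lemma core (n : ℕ) (b c d : Perm (Fin (n + 2)))
    (hb : b.IsCycle) (hb' : b.support.card = n + 2)
    (x₀ y₀ : Fin (n + 2)) (hx₀ : x₀.val = 0) (hxy : x₀ ≠ y₀)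
    (hc : c = Equiv.swap x₀ y₀)
    (hd : d.IsSwap)
    (h : finRotate (n + 2) * d * b * c = 1) :
    ∃ z, z ^ 2 = 1 ∧ z * finRotate (n + 2) * z = b ∧ z * c * z = d := by
  have htl : y₀.val < n + 2 := y₀.isLt
  have ht0 : 0 < y₀.val := by
    rcases Nat.eq_zero_or_pos y₀.val with h0 | h0
    · exact absurd (Fin.ext (hx₀.trans h0.symm)) hxy
    · exact h0
  have aval : ∀ w : Fin (n + 2), ((finRotate (n + 2)) w).val =
      if w.val + 1 < n + 2 then w.val + 1 else 0 := by
    intro w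
    rw [finRotate_succ_apply, Fin.val_add_one]
    rcases eq_or_ne w (Fin.last (n + 1)) with hw | hw
    · subst hw; simp [Fin.last]
    · rw [if_neg hw, if_pos]
      have h1 := w.isLt
      have h2 : w.val ≠ n + 1 := fun hh => hw (Fin.ext hh)
      omega
  have swapval : ∀ X Y w : Fin (n + 2), (Equiv.swap X Y w).val =
      if w.val = X.val then Y.val else if w.val = Y.val then X.val else w.val := by
    intro X Y w
    simp only [Equiv.swap_apply_def, Fin.val_eq_val, apply_ite Fin.val]
  obtain ⟨U, V, hUV, rfl⟩ := hd
  have hmul : finRotate (n + 2) * Equiv.swap U V * b = c⁻¹ :=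
    eq_inv_iff_mul_eq_one.mpr h
  have hre : ∀ w, finRotate (n + 2) (Equiv.swap U V (b w)) = Equiv.swap x₀ y₀ w := by
    intro w
    have e := DFunLike.congr_fun hmul w
    simp only [Equiv.Perm.mul_apply] at e
    rw [e, hc, Equiv.swap_inv]
  have hbsupp : b.support = Finset.univ :=
    Finset.eq_univ_of_card _ (by rw [hb']; simp)
  have hbmove : ∀ x : Fin (n + 2), b x ≠ x := by
    intro x
    have : x ∈ b.support := hbsupp ▸ Finset.mem_univ x
    exact Equiv.Perm.mem_support.mp this
  have hsame : ∀ x y : Fin (n + 2), ∃ k : ℕ, (b ^ k) x = y := fun x y =>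
    hb.exists_pow_eq (hbmove x) (hbmove y)
  have notlt : ¬(U.val < y₀.val ∧ V.val < y₀.val) := by
    rintro ⟨hu, hv⟩
    have hinv : ∀ x : Fin (n + 2), y₀.val ≤ x.val → y₀.val ≤ (b x).val := by
      intro x hx
      by_contra hw
      push_neg at hw
      have e := congrArg Fin.val (hre x)
      rw [aval, swapval, swapval, hx₀] at e
      have h1 := (b x).isLt
      have h2 : x.val ≠ 0 := by omega
      split_ifs at e <;> omega
    obtain ⟨k, hk⟩ := hsame y₀ x₀
    have := orbit_invariant b (fun x => y₀.val ≤ x.val) hinv k y₀ le_rfl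
    rw [hk, hx₀] at this
    omega
  have notge : ¬(y₀.val ≤ U.val ∧ y₀.val ≤ V.val) := by
    rintro ⟨hu, hv⟩
    have hinv : ∀ x : Fin (n + 2), x.val < y₀.val → (b x).val < y₀.val := by
      intro x hx
      by_contra hw
      push_neg at hw
      have e := congrArg Fin.val (hre x)
      rw [aval, swapval, swapval, hx₀] at e
      have h1 := (b x).isLt
      split_ifs at e <;> omega
    obtain ⟨k, hk⟩ := hsame x₀ y₀
    have := orbit_invariant b (fun x => x.val < y₀.val) hinv k x₀ (by omega)
    rw [hk] at this
    omega
  rcases Nat.lt_or_ge U.val y₀.val with hu | hu <;>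
    rcases Nat.lt_or_ge V.val y₀.val with hv | hv
  · exact absurd ⟨hu, hv⟩ notlt
  · obtain ⟨z, h1, h2, h3⟩ := coreB n b x₀ y₀ U V hx₀ hu hv hre
    exact ⟨z, h1, h2, by rw [hc]; exact h3⟩
  · have hre' : ∀ w, finRotate (n + 2) (Equiv.swap V U (b w)) = Equiv.swap x₀ y₀ w := by
      intro w
      rw [Equiv.swap_comm]
      exact hre w
    obtain ⟨z, h1, h2, h3⟩ := coreB n b x₀ y₀ V U hx₀ hv hu hre'
    refine ⟨z, h1, h2, ?_⟩
    rw [hc, Equiv.swap_comm U V]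
    exact h3
  · exact absurd ⟨hu, hv⟩ notge

/-- **Lemma A.1(1)**: if `a, b` are `ℓ`-cycles, `c, d` are transpositions in `Sym(ℓ)`
and `a·d·b·c = 1`, then there is an involution `z` with `z·a·z = b` and `z·c·z = d`. -/
theorem statement9 (ℓ : ℕ) (hℓ : 2 ≤ ℓ) (a b c d : Equiv.Perm (Fin ℓ))
    (ha : a.IsCycle) (ha' : a.support.card = ℓ)
    (hb : b.IsCycle) (hb' : b.support.card = ℓ)
    (hc : c.IsSwap) (hd : d.IsSwap)
    (h : a * d * b * c = 1) :
    ∃ z : Equiv.Perm (Fin ℓ), z ^ 2 = 1 ∧ z * a * z = b ∧ z * c * z = d := by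
  obtain ⟨m, rfl⟩ : ∃ m, ℓ = m + 2 := ⟨ℓ - 2, by omega⟩
  have hconj : IsConj a (finRotate (m + 2)) :=
    ha.isConj isCycle_finRotate (by rw [ha', support_finRotate]; simp)
  obtain ⟨σ, hσ⟩ := isConj_iff.mp hconj
  obtain ⟨x, y, hxy, hcxy⟩ := hc
  obtain ⟨p, q, hpq, hdpq⟩ := hd
  have hrmove : ∀ w : Fin (m + 2), finRotate (m + 2) w ≠ w := by
    intro w
    have : w ∈ (finRotate (m + 2)).support := support_finRotate ▸ Finset.mem_univ w
    exact Equiv.Perm.mem_support.mp this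
  obtain ⟨k, hk⟩ : ∃ k : ℕ, ((finRotate (m + 2)) ^ k) (σ x) = ⟨0, by omega⟩ :=
    isCycle_finRotate.exists_pow_eq (hrmove (σ x)) (hrmove _)
  set ρ : Perm (Fin (m + 2)) := (finRotate (m + 2)) ^ k with hρdef
  have hρcomm : ρ * finRotate (m + 2) = finRotate (m + 2) * ρ :=
    ((Commute.refl (finRotate (m + 2))).pow_left k).eq
  set τ : Perm (Fin (m + 2)) := ρ * σ with hτdef
  apply conj_transfer τ
  have hτa : τ * a * τ⁻¹ = finRotate (m + 2) := by
    have e : τ * a * τ⁻¹ = ρ * (σ * a * σ⁻¹) * ρ⁻¹ := by rw [hτdef]; group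
    rw [e, hσ, hρcomm]
    group
  have hτc : τ * c * τ⁻¹ = Equiv.swap (τ x) (τ y) := by
    rw [hcxy]
    exact (Equiv.swap_apply_apply τ x y).symm
  have hrel : finRotate (m + 2) * (τ * d * τ⁻¹) * (τ * b * τ⁻¹) * (τ * c * τ⁻¹) = 1 := by
    rw [← hτa]
    have e : τ * a * τ⁻¹ * (τ * d * τ⁻¹) * (τ * b * τ⁻¹) * (τ * c * τ⁻¹) =
        τ * (a * d * b * c) * τ⁻¹ := by group
    rw [e, h]
    group
  have hτx : (τ x).val = 0 := by
    have : τ x = ⟨0, by omega⟩ := by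
      rw [hτdef]
      simpa [Equiv.Perm.mul_apply] using hk
    rw [this]
  obtain ⟨z, h1, h2, h3⟩ := core m (τ * b * τ⁻¹) (τ * c * τ⁻¹) (τ * d * τ⁻¹)
    (hb.conj) (by rw [Equiv.Perm.card_support_conj]; exact hb')
    (τ x) (τ y) hτx (fun he => hxy (τ.injective he)) hτc
    ⟨τ p, τ q, fun he => hpq (τ.injective he), by
      rw [hdpq]
      exact (Equiv.swap_apply_apply τ p q).symm⟩
    hrel
  refine ⟨z, h1, ?_, h3⟩
  rw [hτa]
  exact h2
end

section
/- Let ℓ ≥ 4 be an integer, let a, b ∈ Sym(ℓ) be ℓ-cycles and let c, d ∈ Sym(ℓ) be transpositions with disjoint supports, such that a·b·c·d = 1 in Sym(ℓ). Then there exists v ∈ Sym(ℓ) with v² = c·d, v·b·v⁻¹ = a, and v·a·v⁻¹ = (c·d)·b·(c·d). -/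
/-!
Since `c * d` is an involution, `a * b = c * d`. If `t` is an involution with `t * b * t = a`,
then `v = t * b` works: `v ^ 2 = t * b * t * b = a * b`, `v` conjugates `b` to `t * b * t = a`,
and it conjugates `a = v * b * v⁻¹` to `v ^ 2 * b * (v ^ 2)⁻¹ = (c * d) * b * (c * d)`.

To find `t`, conjugate so that `b` becomes the rotation `i ↦ i + 1` of `Fin (n + 1)` and `c`
moves the last point `n`, so that `c * d = (n J) (K M)` with `K < M`. Then `a = (n J) (K M) b⁻¹`
runs backwards through each of the arcs into which `n, J, K, M` cut the circle, jumping at the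
ends of the arcs. If the chords `{n, J}` and `{K, M}` do not cross, `a` preserves a proper arc
and cannot be an `ℓ`-cycle. If they cross (`K < J < M`), the involution reversing each of the
arcs `[0, K]`, `(K, J]`, `(J, M]`, `(M, n]` conjugates `b` to `a`.
-/

open Equiv Equiv.Perm Finset

theorem exists_sq_eq_and_conj_of_involution {G : Type*} [Group G] {a b t τ : G}
    (ht : t * t = 1) (hτ : τ * τ = 1) (htb : t * b * t = a) (hab : a * b = τ) :
    ∃ v : G, v ^ 2 = τ ∧ v * b * v⁻¹ = a ∧ v * a * v⁻¹ = τ * b * τ := by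
  have hv : t * b * (t * b) = τ := by rw [← hab, ← htb]; group
  have hvb : t * b * b * (t * b)⁻¹ = a := by
    rw [← htb, mul_inv_rev, inv_eq_of_mul_eq_one_right ht]; group
  refine ⟨t * b, by rw [sq, hv], hvb, ?_⟩
  calc t * b * a * (t * b)⁻¹ = t * b * (t * b) * b * (t * b * (t * b))⁻¹ := by
        rw [← hvb]; group
    _ = τ * b * τ := by rw [hv, inv_eq_of_mul_eq_one_right hτ]

namespace Equiv.Perm.IsCycle

variable {α : Type*} [Fintype α] [DecidableEq α] {σ τ : Perm α}

theorem mem_of_mapsTo (hσ : σ.IsCycle) (hσ' : σ.support = univ) {S : Set α}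
    (hS : Set.MapsTo σ S S) {x : α} (hx : x ∈ S) (y : α) : y ∈ S := by
  have hmoves (z : α) : σ z ≠ z := mem_support.mp (hσ' ▸ mem_univ z)
  obtain ⟨i, -, rfl⟩ := (hσ.sameCycle (hmoves x) (hmoves y)).exists_pow_eq'
  rw [coe_pow]
  exact hS.iterate i hx

theorem exists_conj_eq_and_apply_eq (hσ : σ.IsCycle) (hσ' : σ.support = univ)
    (hτ : τ.IsCycle) (hτ' : τ.support = univ) (x y : α) :
    ∃ g : Perm α, g * σ * g⁻¹ = τ ∧ g x = y := by
  obtain ⟨c, hc⟩ := _root_.isConj_iff.mp (hσ.isConj hτ (by rw [hσ', hτ']))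
  have hmoves (z : α) : τ z ≠ z := mem_support.mp (hτ' ▸ mem_univ z)
  obtain ⟨i, hi⟩ := hτ.exists_pow_eq (hmoves (c x)) (hmoves y)
  refine ⟨τ ^ i * c, ?_, by simpa using hi⟩
  calc τ ^ i * c * σ * (τ ^ i * c)⁻¹ = τ ^ i * (c * σ * c⁻¹) * (τ ^ i)⁻¹ := by group
    _ = τ := by rw [hc]; group

end Equiv.Perm.IsCycle

theorem Fin.val_swap_apply {N : ℕ} (a b x : Fin N) :
    (swap a b x : ℕ) =
      if (x : ℕ) = a then (b : ℕ) else if (x : ℕ) = b then (a : ℕ) else x := by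
  simp only [swap_apply_def, Fin.ext_iff]
  split_ifs <;> rfl

section ArcReflect

variable {n : ℕ}

/-- For `K ≤ J ≤ M`, reverses each of the arcs `[0, K]`, `(K, J]`, `(J, M]`, `(M, n]` of
`Fin (n + 1)`. -/
def arcReflect (K J M v : Fin (n + 1)) : Fin (n + 1) :=
  ⟨if (v : ℕ) ≤ K then K - v else if (v : ℕ) ≤ J then K + J + 1 - v
    else if (v : ℕ) ≤ M then J + M + 1 - v else M + n + 1 - v, by split_ifs <;> omega⟩

theorem val_arcReflect_cases (K J M v : Fin (n + 1)) :
    (v ≤ K ∧ (arcReflect K J M v : ℕ) = K - v) ∨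
    (K < v ∧ v ≤ J ∧ (arcReflect K J M v : ℕ) = K + J + 1 - v) ∨
    (J < v ∧ v ≤ M ∧ (arcReflect K J M v : ℕ) = J + M + 1 - v) ∨
    (M < v ∧ (arcReflect K J M v : ℕ) = M + n + 1 - v) := by
  simp only [arcReflect, Fin.le_def, Fin.lt_def]
  split_ifs <;> omega

variable {K J M : Fin (n + 1)}

theorem arcReflect_involutive (hKJ : K ≤ J) (hJM : J ≤ M) :
    Function.Involutive (arcReflect K J M) := fun v => by
  have h₁ := val_arcReflect_cases K J M v
  have h₂ := val_arcReflect_cases K J M (arcReflect K J M v)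
  simp only [Fin.ext_iff, Fin.le_def, Fin.lt_def] at *
  omega

theorem arcReflect_add_one_add_one (hKJ : K ≤ J) (hJM : J ≤ M) {y : Fin (n + 1)}
    (hyK : y ≠ K) (hyJ : y ≠ J) (hyM : y ≠ M) (hy : y ≠ Fin.last n) :
    arcReflect K J M (y + 1) + 1 = arcReflect K J M y := by
  have hy₁ : ((y + 1 : Fin (n + 1)) : ℕ) = y + 1 :=
    Fin.val_add_one_of_lt (Fin.lt_last_iff_ne_last.mpr hy)
  have h₁ := val_arcReflect_cases K J M y
  have h₂ := val_arcReflect_cases K J M (y + 1)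
  simp only [Fin.le_def, Fin.lt_def, ne_eq, Fin.ext_iff, Fin.val_last] at *
  rw [hy₁] at h₂
  rw [Fin.val_add_one_of_lt' (by omega)]
  omega

theorem arcReflect_boundary (hKJ : K < J) (hJM : J < M) (hM : M < Fin.last n) :
    arcReflect K J M 0 = K ∧ arcReflect K J M (K + 1) = J ∧
      arcReflect K J M (J + 1) = M ∧ arcReflect K J M (M + 1) = Fin.last n := by
  have hK₁ := Fin.val_add_one_of_lt (hKJ.trans (hJM.trans hM))
  have hJ₁ := Fin.val_add_one_of_lt (hJM.trans hM)
  have hM₁ := Fin.val_add_one_of_lt hM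
  have h₀ := val_arcReflect_cases K J M 0
  have hK := val_arcReflect_cases K J M (K + 1)
  have hJ := val_arcReflect_cases K J M (J + 1)
  have hM' := val_arcReflect_cases K J M (M + 1)
  simp only [Fin.ext_iff, Fin.le_def, Fin.lt_def, Fin.val_last, Fin.val_zero] at *
  rw [hK₁] at hK
  rw [hJ₁] at hJ
  rw [hM₁] at hM'
  omega

theorem arcReflect_arcReflect_add_one_add_one (hKJ : K < J) (hJM : J < M)
    (hM : M < Fin.last n) (y : Fin (n + 1)) :
    arcReflect K J M (arcReflect K J M (y + 1) + 1) = swap (Fin.last n) J (swap K M y) := by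
  obtain ⟨h₀, hK, hJ, hM'⟩ := arcReflect_boundary hKJ hJM hM
  have hKl : K < Fin.last n := hKJ.trans (hJM.trans hM)
  by_cases hy : y = K ∨ y = J ∨ y = M ∨ y = Fin.last n
  · rcases hy with rfl | rfl | rfl | rfl
    · rw [hK, hJ, swap_apply_left, swap_apply_of_ne_of_ne hM.ne hJM.ne']
    · rw [hJ, hM', swap_apply_of_ne_of_ne hKJ.ne' hJM.ne, swap_apply_right]
    · rw [hM', Fin.last_add_one, h₀, swap_apply_right, swap_apply_of_ne_of_ne hKl.ne hKJ.ne]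
    · rw [Fin.last_add_one, h₀, hK, swap_apply_of_ne_of_ne hKl.ne' hM.ne', swap_apply_left]
  · simp only [not_or] at hy
    obtain ⟨hyK, hyJ, hyM, hyl⟩ := hy
    rw [arcReflect_add_one_add_one hKJ.le hJM.le hyK hyJ hyM hyl,
      arcReflect_involutive hKJ.le hJM.le, swap_apply_of_ne_of_ne hyK hyM,
      swap_apply_of_ne_of_ne hyl hyJ]

end ArcReflect

section Rotation

variable {n : ℕ} {a : Perm (Fin (n + 1))} {J K M : Fin (n + 1)}

theorem mapsTo_Iic_of_mul_finRotate_eq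
    (haf : a * finRotate (n + 1) = swap (Fin.last n) J * swap K M)
    (hJK : J < K) (hJM : J < M) (hK : K ≠ Fin.last n) (hM : M ≠ Fin.last n) :
    Set.MapsTo a (Set.Iic J) (Set.Iic J) := by
  intro x hx
  obtain ⟨y, rfl⟩ := (finRotate (n + 1)).surjective x
  rw [← Perm.mul_apply, haf]
  simp only [Set.mem_Iic, Fin.le_def, Fin.lt_def, ne_eq, Fin.ext_iff, Fin.val_last,
    coe_finRotate] at *
  simp only [Perm.mul_apply, Fin.val_swap_apply, Fin.val_last]
  split_ifs at hx ⊢ <;> omega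

theorem mapsTo_Ioc_of_mul_finRotate_eq
    (haf : a * finRotate (n + 1) = swap (Fin.last n) J * swap K M) (hKM : K < M) (hMJ : M < J) :
    Set.MapsTo a (Set.Ioc K M) (Set.Ioc K M) := by
  intro x hx
  obtain ⟨y, rfl⟩ := (finRotate (n + 1)).surjective x
  rw [← Perm.mul_apply, haf]
  simp only [Set.mem_Ioc, Fin.le_def, Fin.lt_def, Fin.ext_iff, Fin.val_last, coe_finRotate] at *
  simp only [Perm.mul_apply, Fin.val_swap_apply, Fin.val_last]
  split_ifs at hx ⊢ <;> omega

theorem exists_involution_conj_finRotate (hJ : J ≠ Fin.last n) (hK : K ≠ Fin.last n)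
    (hM : M ≠ Fin.last n) (hJK : J ≠ K) (hJM : J ≠ M) (hKM : K ≠ M) (ha : a.IsCycle)
    (ha' : a.support = univ) (haf : a * finRotate (n + 1) = swap (Fin.last n) J * swap K M) :
    ∃ t : Perm (Fin (n + 1)), t * t = 1 ∧ t * finRotate (n + 1) * t = a := by
  wlog hKM' : K < M generalizing K M
  · exact this hM hK hJM hJK hKM.symm (by rwa [swap_comm M K]) (hKM.lt_or_gt.resolve_left hKM')
  rcases hJK.lt_or_gt with hJK' | hKJ
  · have := ha.mem_of_mapsTo ha' (mapsTo_Iic_of_mul_finRotate_eq haf hJK' (hJK'.trans hKM') hK hM)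
      (Set.mem_Iic.mpr le_rfl) (Fin.last n)
    exact absurd (Fin.last_le_iff.mp this) hJ
  rcases hJM.lt_or_gt with hJM' | hMJ
  · have hinv := arcReflect_involutive hKJ.le hJM'.le
    refine ⟨hinv.toPerm, Perm.ext hinv, mul_right_cancel (b := finRotate (n + 1)) ?_⟩
    rw [haf]
    ext y : 1
    simp [finRotate_apply,
      arcReflect_arcReflect_add_one_add_one hKJ hJM' (Fin.lt_last_iff_ne_last.mpr hM)]
  · have := ha.mem_of_mapsTo ha' (mapsTo_Ioc_of_mul_finRotate_eq haf hKM' hMJ)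
      (Set.right_mem_Ioc.mpr hKM') K
    simp at this

end Rotation

theorem exists_involution_conj_of_mul_eq_swap_mul_swap {n : ℕ} {a b : Perm (Fin (n + 1))}
    {p q r s : Fin (n + 1)} (hpq : p ≠ q) (hrs : r ≠ s)
    (hcd : (swap p q).Disjoint (swap r s)) (ha : a.IsCycle) (ha' : a.support = univ)
    (hb : b.IsCycle) (hb' : b.support = univ) (hab : a * b = swap p q * swap r s) :
    ∃ t : Perm (Fin (n + 1)), t * t = 1 ∧ t * b * t = a := by
  have hdist := disjoint_iff_disjoint_support.mp hcd
  simp only [support_swap hpq, support_swap hrs, disjoint_insert_left, disjoint_insert_right,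
    disjoint_singleton, mem_insert, mem_singleton, not_or] at hdist
  obtain ⟨⟨hrp, hrq⟩, hps, hqs⟩ := hdist
  have hn : 2 ≤ n + 1 := by simpa [hb'] using hb.two_le_card_support
  obtain ⟨g, hg, hgp⟩ := hb.exists_conj_eq_and_apply_eq hb' (isCycle_finRotate_of_le hn)
    (support_finRotate_of_le hn) p (Fin.last n)
  have hne {x y : Fin (n + 1)} (hxy : x ≠ y) : g x ≠ g y := g.injective.ne hxy
  obtain ⟨t, ht, htb⟩ := exists_involution_conj_finRotate (a := g * a * g⁻¹)
    (J := g q) (K := g r) (M := g s) (hgp ▸ hne hpq.symm) (hgp ▸ hne hrp)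
    (hgp ▸ hne (Ne.symm hps)) (hne (Ne.symm hrq)) (hne hqs) (hne hrs) ha.conj
    (by rw [support_conj, ha', map_univ_equiv])
    (by rw [← hg, ← hgp, swap_apply_apply, swap_apply_apply,
      show g * a * g⁻¹ * (g * b * g⁻¹) = g * (a * b) * g⁻¹ by group, hab]; group)
  refine ⟨g⁻¹ * t * g, ?_, ?_⟩
  · calc g⁻¹ * t * g * (g⁻¹ * t * g) = g⁻¹ * (t * t) * g := by group
      _ = 1 := by rw [ht]; group
  · calc g⁻¹ * t * g * b * (g⁻¹ * t * g) = g⁻¹ * (t * (g * b * g⁻¹) * t) * g := by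
          group
      _ = a := by rw [hg, htb]; group

theorem statement10_general (ℓ : ℕ) (a b c d : Equiv.Perm (Fin ℓ))
    (ha : a.IsCycle) (ha' : a.support.card = ℓ)
    (hb : b.IsCycle) (hb' : b.support.card = ℓ)
    (hc : c.IsSwap) (hd : d.IsSwap) (hcd : c.Disjoint d)
    (h : a * b * c * d = 1) :
    ∃ v : Equiv.Perm (Fin ℓ),
      v ^ 2 = c * d ∧ v * b * v⁻¹ = a ∧ v * a * v⁻¹ = (c * d) * b * (c * d) := by
  obtain ⟨p, q, hpq, rfl⟩ := hc
  obtain ⟨r, s, hrs, rfl⟩ := hd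
  obtain ⟨n, rfl⟩ := Nat.exists_eq_add_one_of_ne_zero p.pos.ne'
  have hτ : swap p q * swap r s * (swap p q * swap r s) = 1 := by
    rw [hcd.symm.commute.mul_mul_mul_comm, swap_mul_self, swap_mul_self, one_mul]
  have hab : a * b = swap p q * swap r s := by
    rw [eq_inv_of_mul_eq_one_left (by rwa [← mul_assoc] : a * b * (swap p q * swap r s) = 1),
      inv_eq_of_mul_eq_one_right hτ]
  have huniv {σ : Perm (Fin (n + 1))} (hσ : #σ.support = n + 1) : σ.support = univ :=
    eq_univ_of_card _ (by rw [hσ, Fintype.card_fin])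
  obtain ⟨t, ht, htb⟩ := exists_involution_conj_of_mul_eq_swap_mul_swap hpq hrs hcd ha
    (huniv ha') hb (huniv hb') hab
  exact exists_sq_eq_and_conj_of_involution ht hτ htb hab

/-- **Lemma A.1(2)**: if `a, b` are `ℓ`-cycles, `c, d` are disjoint transpositions in
`Sym(ℓ)` and `a·b·c·d = 1`, then there exists `v` with `v² = c·d`, `v·b·v⁻¹ = a` and
`v·a·v⁻¹ = (c·d)·b·(c·d)`. -/
theorem statement10 (ℓ : ℕ) (hℓ : 4 ≤ ℓ) (a b c d : Equiv.Perm (Fin ℓ))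
    (ha : a.IsCycle) (ha' : a.support.card = ℓ)
    (hb : b.IsCycle) (hb' : b.support.card = ℓ)
    (hc : c.IsSwap) (hd : d.IsSwap) (hcd : c.Disjoint d)
    (h : a * b * c * d = 1) :
    ∃ v : Equiv.Perm (Fin ℓ),
      v ^ 2 = c * d ∧ v * b * v⁻¹ = a ∧ v * a * v⁻¹ = (c * d) * b * (c * d) :=
  statement10_general ℓ a b c d ha ha' hb hb' hc hd hcd h
end

section
/- For every integer ℓ ≥ 9 there exist x₁, x₂, x₃ ∈ Sym(ℓ) such that x₁·x₂·x₃ = 1, the subgroup generated by x₁, x₂, x₃ contains Alt(ℓ), x₁ and x₂ are ℓ-cycles, and x₃ is a 3-cycle. -/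
/-!
Let `σ` be an `ℓ`-cycle and `t = (σx σ²x)` a transposition of two adjacent points of `σ`.
Take `x₁ = σ`, `x₃ = σ⁻¹tσt = (x σx σ²x)` and `x₂ = σ⁻¹tσ⁻¹tσ`, a conjugate of `σ⁻¹`;
then `x₁x₂x₃ = 1`. Since `t` conjugates `σ` to `σx₃` and `x₃` to `x₃⁻¹`, the subgroup
`⟨σ, x₃⟩` is normalised by `σ` and `t`, which generate `Sym(ℓ)`. A normal subgroup of `Sym(ℓ)`
containing one 3-cycle contains all of them, hence contains `Alt(ℓ)`.
-/

open Equiv Equiv.Perm Subgroup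

namespace Subgroup

variable {G : Type*} [Group G]

theorem mem_normalizer_closure_of_mul_self_eq_one {s : Set G} {t : G} (ht : t * t = 1)
    (hs : ∀ g ∈ s, t * g * t⁻¹ ∈ closure s) : t ∈ normalizer (closure s : Set G) := by
  have hconj : ∀ h ∈ closure s, t * h * t⁻¹ ∈ closure s := fun _ hh =>
    (closure_le ((closure s).comap (MulAut.conj t).toMonoidHom)).2 hs hh
  refine mem_normalizer_iff.2 fun h => ⟨hconj h, fun hh => ?_⟩
  have := hconj _ hh
  rwa [inv_eq_of_mul_eq_one_right ht, ← mul_assoc, ← mul_assoc, ht, one_mul, mul_assoc, ht,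
    mul_one] at this

theorem closure_pair_inv_mul_mul_mul_normal {a t : G} (ht : t * t = 1)
    (hgen : closure {a, t} = ⊤) : (closure {a, a⁻¹ * t * a * t}).Normal := by
  have ht' : t⁻¹ = t := inv_eq_of_mul_eq_one_right ht
  have ha : a ∈ closure {a, a⁻¹ * t * a * t} := subset_closure (Set.mem_insert _ _)
  have hc : a⁻¹ * t * a * t ∈ closure {a, a⁻¹ * t * a * t} :=
    subset_closure (Set.mem_insert_of_mem _ rfl)
  rw [← normalizer_eq_top_iff, eq_top_iff, ← hgen, closure_le, Set.insert_subset_iff,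
    Set.singleton_subset_iff]
  refine ⟨le_normalizer ha, mem_normalizer_closure_of_mul_self_eq_one ht ?_⟩
  rintro g (rfl | rfl)
  · have : t * g * t⁻¹ = g * (g⁻¹ * t * g * t) := by rw [ht']; group
    exact this ▸ mul_mem ha hc
  · have : t * (a⁻¹ * t * a * t) * t⁻¹ = (a⁻¹ * t * a * t)⁻¹ := by
      simp only [ht', mul_inv_rev, inv_inv, mul_assoc, ht, mul_one]
    exact this ▸ inv_mem hc

end Subgroup

namespace Equiv.Perm

variable {α : Type*} [DecidableEq α] [Fintype α]

theorem alternatingGroup_le_of_normal_of_isThreeCycle_mem {N : Subgroup (Perm α)} [N.Normal]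
    {g : Perm α} (hg : g.IsThreeCycle) (hgN : g ∈ N) : alternatingGroup α ≤ N := by
  rw [← closure_three_cycles_eq_alternating, closure_le]
  intro c hc
  obtain ⟨π, rfl⟩ := isConj_iff.1 (isConj_iff_cycleType_eq.2 (hg.trans hc.symm))
  exact Normal.conj_mem ‹_› g hgN π

variable {σ : Perm α}

theorem IsCycle.apply_apply_ne_self
    (hσ : σ.IsCycle) (hσs : σ.support = Finset.univ) (h3 : 3 ≤ Fintype.card α)
    (x : α) : σ (σ x) ≠ x := by
  intro h
  have hx : σ x ≠ x := mem_support.1 (hσs ▸ Finset.mem_univ x)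
  have hsq : σ ^ 2 = 1 := (hσ.pow_eq_one_iff' hx).2 (by rwa [sq, mul_apply])
  have := Nat.le_of_dvd two_pos (orderOf_dvd_of_pow_eq_one hsq)
  rw [hσ.orderOf, hσs, Finset.card_univ] at this
  omega

theorem IsCycle.isThreeCycle_inv_mul_swap_mul_mul_swap
    (hσ : σ.IsCycle) (hσs : σ.support = Finset.univ) (h3 : 3 ≤ Fintype.card α) (x : α) :
    (σ⁻¹ * swap (σ x) (σ (σ x)) * σ * swap (σ x) (σ (σ x))).IsThreeCycle := by
  have hne : ∀ y, σ y ≠ y := fun y => mem_support.1 (hσs ▸ Finset.mem_univ y)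
  have : σ⁻¹ * swap (σ x) (σ (σ x)) * σ = swap (σ x) x :=
    calc σ⁻¹ * swap (σ x) (σ (σ x)) * σ = σ⁻¹ * swap (σ x) (σ (σ x)) * σ⁻¹⁻¹ := by
          rw [inv_inv]
      _ = swap (σ x) x := by rw [← swap_apply_apply, swap_comm]; simp
  rw [this]
  exact isThreeCycle_swap_mul_swap_same (hne x) (hne (σ x)).symm
    (hσ.apply_apply_ne_self hσs h3 x).symm

theorem IsCycle.alternatingGroup_le_closure_inv_mul_swap_mul_mul_swap
    (hσ : σ.IsCycle) (hσs : σ.support = Finset.univ) (h3 : 3 ≤ Fintype.card α) (x : α) :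
    alternatingGroup α ≤ closure {σ, σ⁻¹ * swap (σ x) (σ (σ x)) * σ * swap (σ x) (σ (σ x))} :=
  have := closure_pair_inv_mul_mul_mul_normal (swap_mul_self _ _)
    (closure_cycle_adjacent_swap hσ hσs (σ x))
  alternatingGroup_le_of_normal_of_isThreeCycle_mem
    (hσ.isThreeCycle_inv_mul_swap_mul_mul_swap hσs h3 x)
    (subset_closure (Set.mem_insert_of_mem _ rfl))

theorem IsCycle.exists_mul_mul_eq_one_alternatingGroup_le_closure
    (hσ : σ.IsCycle) (hσs : σ.support = Finset.univ) (h3 : 3 ≤ Fintype.card α) :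
    ∃ x₁ x₂ x₃ : Perm α, x₁ * x₂ * x₃ = 1 ∧
      alternatingGroup α ≤ closure {x₁, x₂, x₃} ∧
      x₁.cycleType = σ.cycleType ∧ x₂.cycleType = σ.cycleType ∧ x₃.IsThreeCycle := by
  obtain ⟨x⟩ : Nonempty α := Fintype.card_pos_iff.1 (by omega)
  set t := swap (σ x) (σ (σ x))
  have hx₂ : σ⁻¹ * t * σ⁻¹ * t * σ = (σ⁻¹ * t) * σ⁻¹ * (σ⁻¹ * t)⁻¹ := by
    rw [mul_inv_rev, swap_inv, inv_inv, mul_assoc]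
  refine ⟨σ, σ⁻¹ * t * σ⁻¹ * t * σ, σ⁻¹ * t * σ * t, by simp [t, mul_assoc], ?_, rfl,
    by rw [hx₂, cycleType_conj, cycleType_inv],
    hσ.isThreeCycle_inv_mul_swap_mul_mul_swap hσs h3 x⟩
  exact (hσ.alternatingGroup_le_closure_inv_mul_swap_mul_mul_swap hσs h3 x).trans <|
    closure_mono <| Set.insert_subset_insert <| Set.singleton_subset_iff.2 <|
      Set.mem_insert_of_mem _ rfl

end Equiv.Perm

/-- **Lemma 9.2, case I1A.1**: for every `ℓ ≥ 9` there is a product-one triple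
`x₁·x₂·x₃ = 1` in `Sym(ℓ)` generating a subgroup containing `Alt(ℓ)`, where `x₁, x₂`
are `ℓ`-cycles and `x₃` is a `3`-cycle. -/
theorem statement11 (ℓ : ℕ) (hℓ : 9 ≤ ℓ) :
    ∃ x₁ x₂ x₃ : Equiv.Perm (Fin ℓ),
      x₁ * x₂ * x₃ = 1 ∧
      alternatingGroup (Fin ℓ) ≤ Subgroup.closure {x₁, x₂, x₃} ∧
      x₁.cycleType = {ℓ} ∧ x₂.cycleType = {ℓ} ∧ x₃.cycleType = {3} := by
  obtain ⟨n, rfl⟩ : ∃ n, ℓ = n + 2 := ⟨ℓ - 2, by omega⟩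
  rw [← cycleType_finRotate]
  exact isCycle_finRotate.exists_mul_mul_eq_one_alternatingGroup_le_closure support_finRotate
    (by rw [Fintype.card_fin]; omega)
end

section
/- For every integer ℓ ≥ 9 there exist x₁, x₂, x₃, x₄ ∈ Sym(ℓ) such that x₁·x₂·x₃·x₄ = 1, the subgroup generated by x₁, x₂, x₃, x₄ contains Alt(ℓ), x₁ and x₂ are ℓ-cycles, and x₃ and x₄ are transpositions. -/
/-! Take `x₁ = σ` an `ℓ`-cycle, `x₂ = σ⁻¹` and `x₃ = x₄` the transposition of a point and
its image under `σ`: a full cycle together with a transposition of two consecutive points of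
it already generates `Sym(ℓ)`. -/

namespace Equiv.Perm

variable {α : Type*} [DecidableEq α] [Fintype α]

theorem closure_cycle_inv_swap_swap_eq_top {σ : Perm α} (hσ : σ.IsCycle)
    (hsupp : σ.support = Finset.univ) (x : α) :
    Subgroup.closure {σ, σ⁻¹, swap x (σ x), swap x (σ x)} = ⊤ :=
  top_le_iff.mp <| (closure_cycle_adjacent_swap hσ hsupp x).ge.trans <|
    Subgroup.closure_mono <| by
      rintro g (rfl | rfl) <;> simp

theorem cycleType_swap_apply {σ : Perm α} {x : α} (hx : σ x ≠ x) :
    (swap x (σ x)).cycleType = {2} :=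
  isSwap_iff_cycleType.mp ⟨x, σ x, hx.symm, rfl⟩

end Equiv.Perm

open Equiv Equiv.Perm in
/-- **Lemma 9.2, case I1A.2**: for every `ℓ ≥ 9` there is a product-one quadruple
`x₁·x₂·x₃·x₄ = 1` in `Sym(ℓ)` generating a subgroup containing `Alt(ℓ)`, where
`x₁, x₂` are `ℓ`-cycles and `x₃, x₄` are transpositions. -/
theorem statement12 (ℓ : ℕ) (hℓ : 9 ≤ ℓ) :
    ∃ x₁ x₂ x₃ x₄ : Equiv.Perm (Fin ℓ),
      x₁ * x₂ * x₃ * x₄ = 1 ∧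
      alternatingGroup (Fin ℓ) ≤ Subgroup.closure {x₁, x₂, x₃, x₄} ∧
      x₁.cycleType = {ℓ} ∧ x₂.cycleType = {ℓ} ∧
      x₃.cycleType = {2} ∧ x₄.cycleType = {2} := by
  have h2 : 2 ≤ ℓ := by omega
  let x : Fin ℓ := ⟨0, by omega⟩
  have hx : finRotate ℓ x ≠ x :=
    mem_support.mp (by simp [support_finRotate_of_le h2])
  refine ⟨finRotate ℓ, (finRotate ℓ)⁻¹, swap x (finRotate ℓ x), swap x (finRotate ℓ x),
    by simp, ?_, cycleType_finRotate_of_le h2, ?_, cycleType_swap_apply hx,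
    cycleType_swap_apply hx⟩
  · rw [closure_cycle_inv_swap_swap_eq_top (isCycle_finRotate_of_le h2)
      (support_finRotate_of_le h2)]
    exact le_top
  · rw [cycleType_inv, cycleType_finRotate_of_le h2]
end

section
/- For all integers ℓ ≥ 9 and a with 0 < a < ℓ/2 and gcd(a,ℓ) = 1, there exist x₁, x₂, x₃ ∈ Sym(ℓ) such that x₁·x₂·x₃ = 1, the subgroup generated by x₁, x₂, x₃ contains Alt(ℓ), the cyclic group generated by x₁ has exactly two orbits on {1,…,ℓ}, of sizes a and ℓ−a, the same holds for x₂, and x₃ is a 3-cycle. -/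
/-!
Write `b = ℓ - a`, take `x₁ = (0 1 … a-1)(a … ℓ-1)` and `x₂ = ((0 1 … b-1)(b … ℓ-1))⁻¹`.
Comparing the two rotations pointwise shows that `x₁ * x₂` is the 3-cycle `(0 b a)`, so
`x₃ = (0 a b)` closes the product. Since `gcd(a, b) = 1`, the Chinese remainder theorem turns
powers of `x₁` into permutations rotating one block of `x₁` and fixing the other pointwise. Hence a
block of imprimitivity containing `0` and a second point contains `a` (via `x₃`), then both blocks
of `x₁`: the group is primitive, and Jordan's theorem on primitive groups containing a 3-cycle
gives `Alt(ℓ)`.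
-/

/-- The cyclic group generated by the permutation `x` has exactly two orbits, of
cardinalities `a` and `b`. -/
def HasTwoOrbitsOfSizes {α : Type*} (x : Equiv.Perm α) (a b : ℕ) : Prop :=
  ∃ ω₁ ω₂ : MulAction.orbitRel.Quotient (Subgroup.zpowers x) α,
    ω₁ ≠ ω₂ ∧ (∀ ω, ω = ω₁ ∨ ω = ω₂) ∧
    Nat.card ω₁.orbit = a ∧ Nat.card ω₂.orbit = b

open Equiv Equiv.Perm Finset MulAction
open scoped Pointwise

section Orbits

variable {α : Type*}

lemma HasTwoOrbitsOfSizes.symm {σ : Perm α} {a b : ℕ} (h : HasTwoOrbitsOfSizes σ a b) :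
    HasTwoOrbitsOfSizes σ b a :=
  let ⟨ω₁, ω₂, hne, hcover, h₁, h₂⟩ := h
  ⟨ω₂, ω₁, hne.symm, fun ω => (hcover ω).symm, h₂, h₁⟩

lemma HasTwoOrbitsOfSizes.inv {σ : Perm α} {a b : ℕ} (h : HasTwoOrbitsOfSizes σ a b) :
    HasTwoOrbitsOfSizes σ⁻¹ a b := by
  rwa [HasTwoOrbitsOfSizes, Subgroup.zpowers_inv]

lemma Equiv.Perm.IsCycleOn.orbit_zpowers_eq {σ : Perm α} {s : Set α} (hσ : σ.IsCycleOn s)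
    {p : α} (hp : p ∈ s) : orbit (Subgroup.zpowers σ) p = s := by
  rw [← hσ.range_zpow hp]
  ext x
  simp [mem_orbit_iff, Subgroup.smul_def]

variable [DecidableEq α] [Fintype α]

lemma hasTwoOrbitsOfSizes_of_isCycleOn {σ : Perm α} {s : Finset α} (hs : σ.IsCycleOn s)
    (hsc : σ.IsCycleOn ↑sᶜ) {p q : α} (hp : p ∈ s) (hq : q ∉ s) :
    HasTwoOrbitsOfSizes σ #s #sᶜ := by
  have hq' : q ∈ sᶜ := Finset.mem_compl.2 hq
  refine ⟨Quotient.mk'' p, Quotient.mk'' q, fun h => hq ?_, fun ω => ?_, ?_, ?_⟩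
  · have := Quotient.eq''.1 h.symm
    rwa [orbitRel_apply, hs.orbit_zpowers_eq hp, Finset.mem_coe] at this
  · induction ω using Quotient.inductionOn' with | h x => ?_
    by_cases hx : x ∈ s
    · exact .inl (Quotient.eq''.2 <| by rw [orbitRel_apply, hs.orbit_zpowers_eq hp]; exact hx)
    · exact .inr (Quotient.eq''.2 <| by
        rw [orbitRel_apply, hsc.orbit_zpowers_eq hq']; exact Finset.mem_compl.2 hx)
  · rw [orbitRel.Quotient.orbit_mk, hs.orbit_zpowers_eq hp, Nat.card_coe_set_eq,
      Set.ncard_coe_finset]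
  · rw [orbitRel.Quotient.orbit_mk, hsc.orbit_zpowers_eq hq', Nat.card_coe_set_eq,
      Set.ncard_coe_finset]

end Orbits

section Primitivity

variable {α : Type*} [DecidableEq α] [Fintype α]

lemma Equiv.Perm.IsCycleOn.exists_pow_apply_eq_of_coprime {σ : Perm α} {s : Finset α}
    (hs : σ.IsCycleOn s) (hsc : σ.IsCycleOn ↑sᶜ) (hcop : (#s).Coprime #sᶜ) {x y : α}
    (hx : x ∈ s) (hy : y ∈ s) : ∃ n : ℕ, (σ ^ n) x = y ∧ ∀ z ∉ s, (σ ^ n) z = z := by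
  obtain ⟨k, -, rfl⟩ := hs.exists_pow_eq hx hy
  let n := Nat.chineseRemainder hcop k 0
  exact ⟨n, (hs.pow_apply_eq_pow_apply hx).2 n.2.1, fun z hz =>
    (hsc.pow_apply_eq (Finset.mem_compl.2 hz)).2 (Nat.modEq_zero_iff_dvd.1 n.2.2)⟩

omit [DecidableEq α] [Fintype α] in
lemma MulAction.IsBlock.apply_mem_of_apply_mem {G : Subgroup (Perm α)} {B : Set α}
    (hB : IsBlock G B) {g : Perm α} (hg : g ∈ G) {x y : α} (hx : x ∈ B) (hgx : g x ∈ B)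
    (hy : y ∈ B) : g y ∈ B := by
  rw [← hB.smul_eq_of_mem (g := ⟨g, hg⟩) hx hgx]
  exact Set.smul_mem_smul_set hy

omit [Fintype α] in
lemma isPreprimitive_of_exists_apply_eq {G : Subgroup (Perm α)} (s : Finset α)
    (hs : ∀ x ∈ s, ∀ y ∈ s, ∃ g ∈ G, g x = y ∧ ∀ z ∉ s, g z = z)
    (hsc : ∀ x ∉ s, ∀ y ∉ s, ∃ g ∈ G, g x = y ∧ ∀ z ∈ s, g z = z)
    {p q r : α} (hp : p ∈ s) (hq : q ∉ s) (hpr : p ≠ r) (hqr : q ≠ r)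
    (hτ : swap p r * swap p q ∈ G) : IsPreprimitive G α := by
  have hpq : p ≠ q := ne_of_mem_of_not_mem hp hq
  set τ := swap p r * swap p q
  have hτp : τ p = q := by simp [τ, swap_apply_of_ne_of_ne hpq.symm hqr]
  have hτr : τ r = p := by simp [τ, swap_apply_of_ne_of_ne hpr.symm hqr.symm]
  have hτz : ∀ z, z ≠ p → z ≠ q → z ≠ r → τ z = z := fun z hzp hzq hzr => by
    simp [τ, swap_apply_of_ne_of_ne hzp hzq, swap_apply_of_ne_of_ne hzp hzr]
  have : IsPretransitive G α := by
    refine (isPretransitive_iff_base p).2 fun x => ?_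
    by_cases hx : x ∈ s
    · obtain ⟨g, hg, hgx, -⟩ := hs p hp x hx
      exact ⟨⟨g, hg⟩, hgx⟩
    · obtain ⟨g, hg, hgx, -⟩ := hsc q hq x hx
      exact ⟨⟨g * τ, G.mul_mem hg hτ⟩, by
        rw [Subgroup.mk_smul, Perm.smul_def, Perm.mul_apply, hτp, hgx]⟩
  refine .of_isTrivialBlock_base p fun {B} hpB hB => ?_
  rw [IsTrivialBlock, or_iff_not_imp_left, Set.not_subsingleton_iff]
  rintro ⟨z₁, hz₁, z₂, hz₂, hz⟩
  obtain ⟨z, hzB, hzp⟩ : ∃ z ∈ B, z ≠ p := by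
    by_cases h : z₁ = p
    · exact ⟨z₂, hz₂, h ▸ hz.symm⟩
    · exact ⟨z₁, hz₁, h⟩
  -- `τ` maps some point of `B` into `B`, hence stabilises `B`.
  have hqB : q ∈ B := by
    rw [← hτp]
    by_cases hzq : z = q
    · rwa [hτp, ← hzq]
    by_cases hzr : z = r
    · exact hB.apply_mem_of_apply_mem hτ (hzr ▸ hzB) (by rwa [hτr]) hpB
    · exact hB.apply_mem_of_apply_mem hτ hzB (by rwa [hτz z hzp hzq hzr]) hpB
  refine Set.eq_univ_of_forall fun x => ?_
  by_cases hx : x ∈ s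
  · obtain ⟨g, hg, rfl, hgs⟩ := hs p hp x hx
    exact hB.apply_mem_of_apply_mem hg hqB (by rwa [hgs q hq]) hpB
  · obtain ⟨g, hg, rfl, hgs⟩ := hsc q hq x hx
    exact hB.apply_mem_of_apply_mem hg hpB (by rwa [hgs p hp]) hqB

theorem alternatingGroup_le_of_isCycleOn_of_coprime {G : Subgroup (Perm α)} {σ : Perm α}
    (hσ : σ ∈ G) {s : Finset α} (hs : σ.IsCycleOn s) (hsc : σ.IsCycleOn ↑sᶜ)
    (hcop : (#s).Coprime #sᶜ) {p q r : α} (hp : p ∈ s) (hq : q ∉ s) (hpr : p ≠ r) (hqr : q ≠ r)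
    (hτ : swap p r * swap p q ∈ G) : alternatingGroup α ≤ G := by
  have hscc : σ.IsCycleOn ↑sᶜᶜ := by rwa [compl_compl]
  refine alternatingGroup_le_of_isPreprimitive_of_isThreeCycle_mem
    (isPreprimitive_of_exists_apply_eq s (fun x hx y hy => ?_) (fun x hx y hy => ?_) hp hq hpr hqr
      hτ)
    (isThreeCycle_swap_mul_swap_same hpr (ne_of_mem_of_not_mem hp hq) hqr.symm) hτ
  · obtain ⟨n, hn, hfix⟩ := hs.exists_pow_apply_eq_of_coprime hsc hcop hx hy
    exact ⟨σ ^ n, G.pow_mem hσ n, hn, hfix⟩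
  · obtain ⟨n, hn, hfix⟩ := hsc.exists_pow_apply_eq_of_coprime hscc (by rwa [compl_compl,
      Nat.coprime_comm]) (Finset.mem_compl.2 hx) (Finset.mem_compl.2 hy)
    exact ⟨σ ^ n, G.pow_mem hσ n, hn, fun z hz => hfix z (by simpa using hz)⟩

end Primitivity

section Rotations

lemma Fin.val_cycleIcc_of_le_of_le {n : ℕ} {i j k : Fin n} (hik : i ≤ k) (hkj : k ≤ j) :
    (Fin.cycleIcc i j k).val = if k = j then i.val else k.val + 1 := by
  have : NeZero n := ⟨by omega⟩
  rw [Fin.cycleIcc_of_le_of_le hik hkj]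
  split_ifs with hk
  · rfl
  · have : k.val < j.val := lt_of_le_of_ne hkj (Fin.val_ne_of_ne hk)
    exact Fin.val_add_one_of_lt' (by omega)

lemma isCycleOn_of_val_apply_eq {n i j : ℕ} {σ : Perm (Fin n)} {s : Finset (Fin n)}
    (hs : ∀ v, v ∈ s ↔ i ≤ v.val ∧ v.val < j)
    (hσ : ∀ v ∈ s, (σ v).val = if v.val + 1 = j then i else v.val + 1) :
    σ.IsCycleOn s := by
  have hmaps : Set.MapsTo σ s s := fun v hv => by
    have := (hs v).1 hv
    rw [Finset.mem_coe, hs, hσ v hv]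
    split_ifs <;> omega
  have hpow : ∀ v ∈ s, ∀ k, v.val + k < j → ((σ ^ k) v).val = v.val + k := by
    intro v hv k
    induction k with
    | zero => simp
    | succ k ih =>
      intro hk
      rw [pow_succ', Perm.mul_apply, hσ _ (hmaps.perm_pow k hv), ih (by omega)]
      split_ifs <;> omega
  have hsame : ∀ x ∈ s, ∀ y ∈ s, x ≤ y → σ.SameCycle x y := fun x hx y hy hxy =>
    ⟨(y.val - x.val : ℕ), Fin.ext <| by
      rw [zpow_natCast, hpow x hx _ (by have := (hs y).1 hy; omega)]
      exact Nat.add_sub_of_le hxy⟩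
  refine ⟨(Set.toFinite _).injOn_iff_bijOn_of_mapsTo hmaps |>.1 σ.injective.injOn,
    fun x hx y hy => ?_⟩
  rcases le_total x y with hxy | hyx
  · exact hsame x hx y hy hxy
  · exact (hsame y hy x hx hyx).symm

def twoBlockRotation (ℓ m : ℕ) (hm : m < ℓ) : Perm (Fin ℓ) :=
  Fin.cycleIcc ⟨0, by omega⟩ ⟨m - 1, by omega⟩ * Fin.cycleIcc ⟨m, hm⟩ ⟨ℓ - 1, by omega⟩

variable {ℓ m : ℕ} (hm₀ : 0 < m) (hm : m < ℓ)

lemma card_compl_Iio : #(Iio (⟨m, hm⟩ : Fin ℓ))ᶜ = ℓ - m := by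
  rw [card_compl, Fin.card_Iio, Fintype.card_fin]

include hm₀

lemma val_twoBlockRotation (v : Fin ℓ) :
    (twoBlockRotation ℓ m hm v).val =
      if v.val + 1 = m then 0 else if v.val + 1 = ℓ then m else v.val + 1 := by
  rw [twoBlockRotation, Perm.mul_apply]
  rcases lt_or_ge v.val m with hv | hv
  · rw [Fin.cycleIcc_of_lt (show v < ⟨m, hm⟩ from hv),
      Fin.val_cycleIcc_of_le_of_le (Nat.zero_le _) (show v.val ≤ m - 1 by omega)]
    simp only [Fin.ext_iff]
    split_ifs <;> omega
  · have hv' : v.val ≤ ℓ - 1 := by omega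
    rw [Fin.cycleIcc_of_gt, Fin.val_cycleIcc_of_le_of_le hv hv']
    · simp only [Fin.ext_iff]
      split_ifs <;> omega
    · rw [Fin.lt_def, Fin.val_cycleIcc_of_le_of_le hv hv']
      split_ifs <;> simp <;> omega

lemma isCycleOn_twoBlockRotation_Iio :
    (twoBlockRotation ℓ m hm).IsCycleOn ↑(Iio (⟨m, hm⟩ : Fin ℓ)) :=
  isCycleOn_of_val_apply_eq (i := 0) (j := m) (fun v => by simp [Fin.lt_def])
    fun v hv => by
      rw [val_twoBlockRotation hm₀ hm]
      have : v.val < m := by simpa [Fin.lt_def] using hv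
      split_ifs <;> omega

lemma isCycleOn_twoBlockRotation_compl_Iio :
    (twoBlockRotation ℓ m hm).IsCycleOn ↑(Iio (⟨m, hm⟩ : Fin ℓ))ᶜ :=
  isCycleOn_of_val_apply_eq (i := m) (j := ℓ) (fun v => by simp [Fin.lt_def, v.isLt])
    fun v hv => by
      rw [val_twoBlockRotation hm₀ hm]
      have : m ≤ v.val := by simpa [Fin.lt_def] using hv
      split_ifs <;> omega

lemma hasTwoOrbitsOfSizes_twoBlockRotation :
    HasTwoOrbitsOfSizes (twoBlockRotation ℓ m hm) m (ℓ - m) := by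
  have h := hasTwoOrbitsOfSizes_of_isCycleOn (isCycleOn_twoBlockRotation_Iio hm₀ hm)
    (isCycleOn_twoBlockRotation_compl_Iio hm₀ hm) (p := ⟨0, by omega⟩) (q := ⟨m, hm⟩)
    (by simp [Fin.lt_def, hm₀]) (by simp)
  rwa [card_compl_Iio hm, Fin.card_Iio] at h

lemma twoBlockRotation_eq_swap_mul_swap_mul {m' : ℕ} (hm₀' : 0 < m') (hm' : m' < ℓ) :
    twoBlockRotation ℓ m' hm' =
      swap ⟨0, by omega⟩ ⟨m', hm'⟩ * swap ⟨0, by omega⟩ ⟨m, hm⟩ * twoBlockRotation ℓ m hm := by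
  ext v
  rw [val_twoBlockRotation hm₀' hm', Perm.mul_apply, Perm.mul_apply]
  have hw := val_twoBlockRotation hm₀ hm v
  generalize twoBlockRotation ℓ m hm v = w at hw ⊢
  simp only [swap_apply_def]
  split_ifs at hw ⊢ <;> simp only [Fin.ext_iff, not_true_eq_false] at * <;> omega

end Rotations

theorem statement14_general (ℓ a : ℕ) (ha : 0 < a) (ha' : 2 * a < ℓ)
    (hgcd : Nat.gcd a ℓ = 1) :
    ∃ x₁ x₂ x₃ : Equiv.Perm (Fin ℓ),
      x₁ * x₂ * x₃ = 1 ∧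
      alternatingGroup (Fin ℓ) ≤ Subgroup.closure {x₁, x₂, x₃} ∧
      HasTwoOrbitsOfSizes x₁ a (ℓ - a) ∧
      HasTwoOrbitsOfSizes x₂ a (ℓ - a) ∧
      x₃.cycleType = {3} := by
  have hal : a < ℓ := by omega
  have hbl : ℓ - a < ℓ := by omega
  let p : Fin ℓ := ⟨0, by omega⟩
  let q : Fin ℓ := ⟨a, hal⟩
  let r : Fin ℓ := ⟨ℓ - a, hbl⟩
  have hpr : p ≠ r := Fin.ne_of_val_ne (by simp [p, r]; omega)
  have hqr : q ≠ r := Fin.ne_of_val_ne (by simp [q, r]; omega)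
  let x₁ := twoBlockRotation ℓ a hal
  let y := twoBlockRotation ℓ (ℓ - a) hbl
  have hy : y = swap p r * swap p q * x₁ :=
    twoBlockRotation_eq_swap_mul_swap_mul ha hal (by omega) hbl
  have hx₂ := (hasTwoOrbitsOfSizes_twoBlockRotation (by omega) hbl).inv.symm
  rw [Nat.sub_sub_self hal.le] at hx₂
  have hcop : (#(Iio q)).Coprime #(Iio q)ᶜ := by
    rwa [Fin.card_Iio, card_compl_Iio, Nat.coprime_sub_self_right hal.le]
  have hp : p ∈ Iio q := Finset.mem_Iio.2 ha
  have hq : q ∉ Iio q := fun h => lt_irrefl q (Finset.mem_Iio.1 h)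
  refine ⟨x₁, y⁻¹, swap p r * swap p q, by rw [hy]; group, ?_,
    hasTwoOrbitsOfSizes_twoBlockRotation ha hal, hx₂,
    (isThreeCycle_swap_mul_swap_same hpr (ne_of_mem_of_not_mem hp hq) hqr.symm).cycleType⟩
  exact alternatingGroup_le_of_isCycleOn_of_coprime (Subgroup.subset_closure (Set.mem_insert _ _))
    (isCycleOn_twoBlockRotation_Iio ha hal) (isCycleOn_twoBlockRotation_compl_Iio ha hal) hcop
    hp hq hpr hqr (Subgroup.subset_closure (by simp))

/-- **Lemma 9.2, case I1A.4**: for all `ℓ ≥ 9` and `0 < a < ℓ/2` with `gcd(a,ℓ) = 1`,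
there is a product-one triple `x₁·x₂·x₃ = 1` in `Sym(ℓ)` generating a subgroup
containing `Alt(ℓ)`, where `⟨x₁⟩` and `⟨x₂⟩` each have exactly two orbits, of sizes
`a` and `ℓ−a`, and `x₃` is a `3`-cycle. -/
theorem statement14 (ℓ a : ℕ) (hℓ : 9 ≤ ℓ) (ha : 0 < a) (ha' : 2 * a < ℓ)
    (hgcd : Nat.gcd a ℓ = 1) :
    ∃ x₁ x₂ x₃ : Equiv.Perm (Fin ℓ),
      x₁ * x₂ * x₃ = 1 ∧
      alternatingGroup (Fin ℓ) ≤ Subgroup.closure {x₁, x₂, x₃} ∧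
      HasTwoOrbitsOfSizes x₁ a (ℓ - a) ∧
      HasTwoOrbitsOfSizes x₂ a (ℓ - a) ∧
      x₃.cycleType = {3} :=
  statement14_general ℓ a ha ha' hgcd
end

section
/- For every integer ℓ ≥ 9 divisible by 3 there exist x₁, x₂, x₃ ∈ Sym(ℓ) such that x₁·x₂·x₃ = 1, the subgroup generated by x₁, x₂, x₃ contains Alt(ℓ), x₁ is a product of ℓ/3 pairwise disjoint 3-cycles (cycle type [3^{ℓ/3}], no fixed points), and each of x₂ and x₃ is a product of one 2-cycle and (ℓ−3)/3 pairwise disjoint 3-cycles, with exactly one fixed point (cycle type [1,2,3^{(ℓ−3)/3}]). -/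
/-!
Write `n = 3m`. Take `x₁ = ∏ (3k, 3k+1, 3k+2)`, `x₂ = (0 1) · ρ₂` with
`ρ₂ = ∏_{k < m-1} (3k+2, 3k+3, 3k+4)`, and `x₃ = (n-3, n-1) · ρ₃` with
`ρ₃ = ∏_{k < m-1} (3k, 3k+4, 3k+2)`; the identity `x₁ x₂ x₃ = 1` is checked pointwise.
Since `x₁³ = ρ₂³ = ρ₃³ = 1`, every cycle of these permutations has length `3`, and the cycle
types are read off from the number of moved points.

For generation: `x₂³ = (0 1)`, and both `x₁` and `x₂` send `0` to `1`. As
`g (a b) g⁻¹ = (g a, g b)`, the relation `(a b) ∈ H` is an `H`-invariant equivalence relation on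
the points, so `H = ⟨x₁, x₂⟩` contains `(0, g 0)` for every `g ∈ H`. Every `j + 1` is `x₁ j` or
`x₂ j`, so `H` is transitive, contains every transposition, and is the whole symmetric group.
-/

open Equiv Finset

namespace Equiv.Perm

variable {α : Type*}

theorem cycleType_eq_replicate_of_pow_prime_eq_one [Fintype α] [DecidableEq α] {σ : Perm α}
    {p : ℕ} [hp : Fact p.Prime] (hσ : σ ^ p = 1) :
    σ.cycleType = Multiset.replicate (#σ.support / p) p := by
  have hcycle := cycleType_of_pow_prime_eq_one hσ
  have hsum := σ.sum_cycleType
  rw [hcycle, Multiset.sum_replicate, smul_eq_mul] at hsum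
  rw [hcycle, ← hsum, Nat.mul_div_cancel _ hp.out.pos]

theorem swap_apply_mem_closure [DecidableEq α] {s : Set (Perm α)} {a : α}
    (hs : ∀ g ∈ s, swap a (g a) ∈ Subgroup.closure s) {h : Perm α}
    (hh : h ∈ Subgroup.closure s) : swap a (h a) ∈ Subgroup.closure s := by
  induction hh using Subgroup.closure_induction with
  | mem g hg => exact hs g hg
  | one =>
    rw [one_apply, swap_self]
    exact one_mem _
  | mul g h hg _ ihg ihh =>
    have hconj : swap (g a) (g (h a)) ∈ Subgroup.closure s := by
      rw [swap_apply_apply]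
      exact mul_mem (mul_mem hg ihh) (inv_mem hg)
    exact SubmonoidClass.swap_mem_trans _ ihg hconj
  | inv g hg ih =>
    have hconj : swap (g⁻¹ a) (g⁻¹ (g a)) ∈ Subgroup.closure s := by
      rw [swap_apply_apply]
      exact mul_mem (mul_mem (inv_mem hg) ih) (inv_mem (inv_mem hg))
    rwa [← Perm.mul_apply, inv_mul_cancel, one_apply, swap_comm] at hconj

theorem closure_eq_top_of_swap_apply_mem [Finite α] [DecidableEq α] {s : Set (Perm α)} {a : α}
    (hs : ∀ g ∈ s, swap a (g a) ∈ Subgroup.closure s)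
    (htrans : ∀ x, ∃ g ∈ Subgroup.closure s, g a = x) : Subgroup.closure s = ⊤ := by
  have hswap_base (x : α) : swap a x ∈ Subgroup.closure s := by
    obtain ⟨g, hg, rfl⟩ := htrans x
    exact swap_apply_mem_closure hs hg
  rw [eq_top_iff, ← closure_isSwap, Subgroup.closure_le]
  rintro _ ⟨x, y, -, rfl⟩
  exact SubmonoidClass.swap_mem_trans _ (swap_comm a x ▸ hswap_base x) (hswap_base y)

theorem card_support_eq_card_sub [Fintype α] [DecidableEq α] {σ : Perm α} {s : Finset α}
    (hfix : ∀ x, σ x = x ↔ x ∈ s) : #σ.support = Fintype.card α - #s := by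
  rw [show σ.support = sᶜ by ext x; simp [hfix], card_compl]

theorem disjoint_swap_left {σ : Perm α} [DecidableEq α] {a b : α} (ha : σ a = a) (hb : σ b = b) :
    Disjoint (swap a b) σ := by
  intro x
  by_cases hx : x = a ∨ x = b
  · rcases hx with rfl | rfl <;> simp [ha, hb]
  · push Not at hx
    exact Or.inl (swap_apply_of_ne_of_ne hx.1 hx.2)

theorem cycleType_swap_mul [Fintype α] [DecidableEq α] {σ : Perm α} {a b : α} (hab : a ≠ b)
    (ha : σ a = a) (hb : σ b = b) : (swap a b * σ).cycleType = 2 ::ₘ σ.cycleType := by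
  rw [(disjoint_swap_left ha hb).cycleType_mul, (isCycle_swap hab).cycleType,
    card_support_swap hab, Multiset.singleton_add]

theorem swap_mul_pow_three {σ : Perm α} [DecidableEq α] {a b : α} (ha : σ a = a) (hb : σ b = b)
    (hσ : σ ^ 3 = 1) : (swap a b * σ) ^ 3 = swap a b := by
  rw [(disjoint_swap_left ha hb).commute.mul_pow, hσ, mul_one, pow_succ, sq, swap_mul_self,
    one_mul]

theorem swap_mul_apply_of_apply_eq_self {σ : Perm α} [DecidableEq α] {a b : α} (ha : σ a = a)
    (hb : σ b = b) (x : α) : (swap a b * σ) x = if x = a then b else if x = b then a else σ x := by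
  rcases eq_or_ne x a with rfl | hxa
  · simp [ha]
  rcases eq_or_ne x b with rfl | hxb
  · simp [hb, hxa]
  have hσx : σ x ≠ a ∧ σ x ≠ b := ⟨fun h ↦ hxa (σ.injective (h.trans ha.symm)),
    fun h ↦ hxb (σ.injective (h.trans hb.symm))⟩
  simp [hxa, hxb, swap_apply_of_ne_of_ne hσx.1 hσx.2]

end Equiv.Perm

namespace ProductOneTriple

def permOfCube {n : ℕ} (f : ℕ → ℕ) (hf : ∀ i < n, f i < n) (hf3 : ∀ i < n, f (f (f i)) = i) :
    Perm (Fin n) where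
  toFun i := ⟨f i, hf i i.2⟩
  invFun i := ⟨f (f i), hf _ (hf i i.2)⟩
  left_inv i := Fin.ext (hf3 i i.2)
  right_inv i := Fin.ext (hf3 i i.2)

section permOfCube

variable {n : ℕ} {f : ℕ → ℕ} {hf : ∀ i < n, f i < n} {hf3 : ∀ i < n, f (f (f i)) = i}

@[simp]
lemma val_permOfCube_apply (i : Fin n) : (permOfCube f hf hf3 i : ℕ) = f i := rfl

lemma permOfCube_pow_three : permOfCube f hf hf3 ^ 3 = 1 := by
  ext i
  simp [pow_succ, hf3 i i.2]

end permOfCube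

def blockRot (i : ℕ) : ℕ := if i % 3 = 2 then i - 2 else i + 1

def shiftedBlockRot (n i : ℕ) : ℕ :=
  if i = 0 ∨ i = 1 ∨ i = n - 1 then i else if i % 3 = 1 then i - 2 else i + 1

def skewBlockRot (n i : ℕ) : ℕ :=
  if i = 1 ∨ i = n - 3 ∨ i = n - 1 then i else if i % 3 = 0 then i + 4 else i - 2

variable {n : ℕ}

def x₁ (h3 : 3 ∣ n) : Perm (Fin n) :=
  permOfCube blockRot (fun i hi ↦ by unfold blockRot; split_ifs <;> omega)
    (fun i hi ↦ by
      generalize hj : blockRot i = j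
      generalize hk : blockRot j = k
      unfold blockRot at hj hk ⊢
      split_ifs at hj hk ⊢ <;> omega)

def ρ₂ (h3 : 3 ∣ n) : Perm (Fin n) :=
  permOfCube (shiftedBlockRot n) (fun i hi ↦ by unfold shiftedBlockRot; split_ifs <;> omega)
    (fun i hi ↦ by
      generalize hj : shiftedBlockRot n i = j
      generalize hk : shiftedBlockRot n j = k
      unfold shiftedBlockRot at hj hk ⊢
      split_ifs at hj hk ⊢ <;> omega)

def ρ₃ (h3 : 3 ∣ n) : Perm (Fin n) :=
  permOfCube (skewBlockRot n) (fun i hi ↦ by unfold skewBlockRot; split_ifs <;> omega)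
    (fun i hi ↦ by
      generalize hj : skewBlockRot n i = j
      generalize hk : skewBlockRot n j = k
      unfold skewBlockRot at hj hk ⊢
      split_ifs at hj hk ⊢ <;> omega)

def x₂ (h3 : 3 ∣ n) (hn : 3 ≤ n) : Perm (Fin n) := swap ⟨0, by omega⟩ ⟨1, by omega⟩ * ρ₂ h3

def x₃ (h3 : 3 ∣ n) (hn : 3 ≤ n) : Perm (Fin n) := swap ⟨n - 3, by omega⟩ ⟨n - 1, by omega⟩ * ρ₃ h3

section

variable (h3 : 3 ∣ n) (hn : 3 ≤ n)

@[simp] lemma val_x₁_apply (i : Fin n) : (x₁ h3 i : ℕ) = blockRot i := rfl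
@[simp] lemma val_ρ₂_apply (i : Fin n) : (ρ₂ h3 i : ℕ) = shiftedBlockRot n i := rfl
@[simp] lemma val_ρ₃_apply (i : Fin n) : (ρ₃ h3 i : ℕ) = skewBlockRot n i := rfl

lemma ρ₂_apply_eq_self_iff (i : Fin n) :
    ρ₂ h3 i = i ↔ i ∈ ({⟨0, by omega⟩, ⟨1, by omega⟩, ⟨n - 1, by omega⟩} : Finset (Fin n)) := by
  have hi := i.2
  simp only [Fin.ext_iff, val_ρ₂_apply, mem_insert, mem_singleton, shiftedBlockRot]
  split_ifs <;> omega

lemma ρ₃_apply_eq_self_iff (i : Fin n) :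
    ρ₃ h3 i = i ↔ i ∈ ({⟨1, by omega⟩, ⟨n - 3, by omega⟩, ⟨n - 1, by omega⟩} : Finset (Fin n)) := by
  have hi := i.2
  simp only [Fin.ext_iff, val_ρ₃_apply, mem_insert, mem_singleton, skewBlockRot]
  split_ifs <;> omega

lemma ρ₂_apply_zero : ρ₂ h3 ⟨0, by omega⟩ = ⟨0, by omega⟩ :=
  (ρ₂_apply_eq_self_iff h3 hn _).2 (by simp)

lemma ρ₂_apply_one : ρ₂ h3 ⟨1, by omega⟩ = ⟨1, by omega⟩ :=
  (ρ₂_apply_eq_self_iff h3 hn _).2 (by simp)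

lemma ρ₃_apply_sub_three : ρ₃ h3 ⟨n - 3, by omega⟩ = ⟨n - 3, by omega⟩ :=
  (ρ₃_apply_eq_self_iff h3 hn _).2 (by simp)

lemma ρ₃_apply_sub_one : ρ₃ h3 ⟨n - 1, by omega⟩ = ⟨n - 1, by omega⟩ :=
  (ρ₃_apply_eq_self_iff h3 hn _).2 (by simp)

lemma x₂_apply (i : Fin n) : x₂ h3 hn i =
    if i = ⟨0, by omega⟩ then ⟨1, by omega⟩
    else if i = ⟨1, by omega⟩ then ⟨0, by omega⟩ else ρ₂ h3 i :=
  Perm.swap_mul_apply_of_apply_eq_self (ρ₂_apply_zero h3 hn) (ρ₂_apply_one h3 hn) i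

lemma x₃_apply (i : Fin n) : x₃ h3 hn i =
    if i = ⟨n - 3, by omega⟩ then ⟨n - 1, by omega⟩
    else if i = ⟨n - 1, by omega⟩ then ⟨n - 3, by omega⟩ else ρ₃ h3 i :=
  Perm.swap_mul_apply_of_apply_eq_self (ρ₃_apply_sub_three h3 hn) (ρ₃_apply_sub_one h3 hn) i

lemma val_x₂_apply (i : Fin n) : (x₂ h3 hn i : ℕ) =
    if (i : ℕ) = 0 then 1 else if (i : ℕ) = 1 then 0 else shiftedBlockRot n i := by
  rw [x₂_apply]
  split_ifs <;> simp_all [Fin.ext_iff]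

lemma val_x₃_apply (i : Fin n) : (x₃ h3 hn i : ℕ) =
    if (i : ℕ) = n - 3 then n - 1 else if (i : ℕ) = n - 1 then n - 3 else skewBlockRot n i := by
  rw [x₃_apply]
  split_ifs <;> simp_all [Fin.ext_iff]

lemma x₁_mul_x₂_mul_x₃ : x₁ h3 * x₂ h3 hn * x₃ h3 hn = 1 := by
  ext i
  have hi := i.2
  have hj := val_x₃_apply h3 hn i
  have hk := val_x₂_apply h3 hn (x₃ h3 hn i)
  rw [Perm.mul_apply, Perm.mul_apply, val_x₁_apply, Perm.one_apply]
  generalize x₃ h3 hn i = j at hj hk ⊢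
  generalize x₂ h3 hn j = k at hk ⊢
  unfold blockRot shiftedBlockRot skewBlockRot at *
  split_ifs at hj hk ⊢ <;> omega

lemma x₁_pow_three : x₁ h3 ^ 3 = 1 := permOfCube_pow_three

lemma ρ₂_pow_three : ρ₂ h3 ^ 3 = 1 := permOfCube_pow_three

lemma ρ₃_pow_three : ρ₃ h3 ^ 3 = 1 := permOfCube_pow_three

lemma x₁_cycleType : (x₁ h3).cycleType = Multiset.replicate (n / 3) 3 := by
  have hfix (i : Fin n) : x₁ h3 i = i ↔ i ∈ (∅ : Finset (Fin n)) := by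
    have hi := i.2
    simp only [Fin.ext_iff, val_x₁_apply, notMem_empty, iff_false, blockRot]
    split_ifs <;> omega
  rw [Perm.cycleType_eq_replicate_of_pow_prime_eq_one (x₁_pow_three h3),
    Perm.card_support_eq_card_sub hfix, card_empty, Fintype.card_fin, Nat.sub_zero]

lemma card_support_ρ₂ (hn : 3 ≤ n) : #(ρ₂ h3).support = n - 3 := by
  rw [Perm.card_support_eq_card_sub (ρ₂_apply_eq_self_iff h3 hn), Fintype.card_fin,
    card_eq_three.2 ⟨_, _, _, by simp [Fin.ext_iff], by simp [Fin.ext_iff]; omega,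
      by simp [Fin.ext_iff]; omega, rfl⟩]

lemma card_support_ρ₃ (hn : 3 ≤ n) : #(ρ₃ h3).support = n - 3 := by
  rw [Perm.card_support_eq_card_sub (ρ₃_apply_eq_self_iff h3 hn), Fintype.card_fin,
    card_eq_three.2 ⟨_, _, _, by simp [Fin.ext_iff]; omega, by simp [Fin.ext_iff]; omega,
      by simp [Fin.ext_iff]; omega, rfl⟩]

lemma x₂_cycleType : (x₂ h3 hn).cycleType = 2 ::ₘ Multiset.replicate ((n - 3) / 3) 3 := by
  rw [x₂, Perm.cycleType_swap_mul (by simp [Fin.ext_iff]) (ρ₂_apply_zero h3 hn)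
    (ρ₂_apply_one h3 hn),
    Perm.cycleType_eq_replicate_of_pow_prime_eq_one (ρ₂_pow_three h3), card_support_ρ₂ h3 hn]

lemma x₃_cycleType : (x₃ h3 hn).cycleType = 2 ::ₘ Multiset.replicate ((n - 3) / 3) 3 := by
  rw [x₃, Perm.cycleType_swap_mul (by simp [Fin.ext_iff]; omega) (ρ₃_apply_sub_three h3 hn)
    (ρ₃_apply_sub_one h3 hn),
    Perm.cycleType_eq_replicate_of_pow_prime_eq_one (ρ₃_pow_three h3), card_support_ρ₃ h3 hn]

lemma x₂_pow_three : x₂ h3 hn ^ 3 = swap ⟨0, by omega⟩ ⟨1, by omega⟩ :=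
  Perm.swap_mul_pow_three (ρ₂_apply_zero h3 hn) (ρ₂_apply_one h3 hn) (ρ₂_pow_three h3)

lemma x₁_apply_or_x₂_apply_eq_succ (j : ℕ) (hj : j + 1 < n) :
    x₁ h3 ⟨j, by omega⟩ = ⟨j + 1, hj⟩ ∨ x₂ h3 hn ⟨j, by omega⟩ = ⟨j + 1, hj⟩ := by
  simp only [Fin.ext_iff, val_x₁_apply, val_x₂_apply, blockRot, shiftedBlockRot]
  split_ifs <;> omega

lemma exists_mem_closure_apply_zero_eq (j : Fin n) :
    ∃ g ∈ Subgroup.closure {x₁ h3, x₂ h3 hn}, g ⟨0, by omega⟩ = j := by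
  obtain ⟨j, hj⟩ := j
  induction j with
  | zero => exact ⟨1, one_mem _, rfl⟩
  | succ j ih =>
    obtain ⟨g, hg, hgj⟩ := ih (by omega)
    have hstep : ∃ x ∈ Subgroup.closure {x₁ h3, x₂ h3 hn}, x ⟨j, by omega⟩ = ⟨j + 1, hj⟩ := by
      rcases x₁_apply_or_x₂_apply_eq_succ h3 hn j hj with h | h <;>
        exact ⟨_, Subgroup.subset_closure (by simp), h⟩
    obtain ⟨x, hx, hxj⟩ := hstep
    exact ⟨x * g, mul_mem hx hg, by rw [Perm.mul_apply, hgj, hxj]⟩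

lemma closure_x₁_x₂_eq_top : Subgroup.closure {x₁ h3, x₂ h3 hn} = ⊤ := by
  have hswap : swap ⟨0, by omega⟩ ⟨1, by omega⟩ ∈ Subgroup.closure {x₁ h3, x₂ h3 hn} :=
    x₂_pow_three h3 hn ▸ pow_mem (Subgroup.subset_closure (by simp)) 3
  refine Perm.closure_eq_top_of_swap_apply_mem ?_ (exists_mem_closure_apply_zero_eq h3 hn)
  rintro g (rfl | rfl)
  · exact hswap
  · rwa [x₂_apply, if_pos rfl]

end

end ProductOneTriple

open ProductOneTriple in
/-- **Lemma 9.2, case F2.1**: for every `ℓ ≥ 9` divisible by `3` there is a product-one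
triple `x₁·x₂·x₃ = 1` in `Sym(ℓ)` generating a subgroup containing `Alt(ℓ)`, where
`x₁` has cycle type `[3^{ℓ/3}]` (no fixed points) and `x₂, x₃` both have cycle type
`[1,2,3^{(ℓ−3)/3}]` (one `2`-cycle, `(ℓ−3)/3` disjoint `3`-cycles, one fixed point). -/
theorem statement16 (ℓ : ℕ) (hℓ : 9 ≤ ℓ) (h3 : 3 ∣ ℓ) :
    ∃ x₁ x₂ x₃ : Equiv.Perm (Fin ℓ),
      x₁ * x₂ * x₃ = 1 ∧
      alternatingGroup (Fin ℓ) ≤ Subgroup.closure {x₁, x₂, x₃} ∧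
      x₁.cycleType = Multiset.replicate (ℓ / 3) 3 ∧
      x₂.cycleType = 2 ::ₘ Multiset.replicate ((ℓ - 3) / 3) 3 ∧
      x₃.cycleType = 2 ::ₘ Multiset.replicate ((ℓ - 3) / 3) 3 := by
  have hℓ3 : 3 ≤ ℓ := by omega
  refine ⟨x₁ h3, x₂ h3 hℓ3, x₃ h3 hℓ3, x₁_mul_x₂_mul_x₃ h3 hℓ3, ?_, x₁_cycleType h3,
    x₂_cycleType h3 hℓ3, x₃_cycleType h3 hℓ3⟩
  calc alternatingGroup (Fin ℓ) ≤ ⊤ := le_top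
    _ = Subgroup.closure {x₁ h3, x₂ h3 hℓ3} := (closure_x₁_x₂_eq_top h3 hℓ3).symm
    _ ≤ Subgroup.closure {x₁ h3, x₂ h3 hℓ3, x₃ h3 hℓ3} :=
      Subgroup.closure_mono (Set.insert_subset_insert (Set.singleton_subset_iff.2 (by simp)))
end

section
/- For every integer ℓ ≥ 9 with ℓ ≡ 1 (mod 3) there exist x₁, x₂, x₃ ∈ Sym(ℓ) such that x₁·x₂·x₃ = 1, the subgroup generated by x₁, x₂, x₃ contains Alt(ℓ), x₁ is a product of two disjoint 2-cycles and (ℓ−4)/3 pairwise disjoint 3-cycles, with no fixed points (cycle type [2²,3^{(ℓ−4)/3}]), and each of x₂ and x₃ is a product of (ℓ−1)/3 pairwise disjoint 3-cycles with exactly one fixed point (cycle type [1,3^{(ℓ−1)/3}]). -/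
/-!
Write `ℓ = 3n + 4` with points `0, …, 3n + 3`, and let `x₂`, `x₃` be the products of the 3-cycles
`(3i, 3i+1, 3i+2)`, resp. `(3i+1, 3i+2, 3i+3)`, and `x₁ = (0 1)(3n+2 3n+3) · ∏ (3i+2, 3i+3, 3i+4)`.
By Jordan's theorem it suffices that `H = ⟨x₁, x₂, x₃⟩` is primitive and contains a 3-cycle.
Since `x₁³ = (0 1)(3n+2 3n+3)` and `w = x₃x₂x₃x₂²x₃x₂x₃²` fixes `0, 1` and sends `3n+2, 3n+3` to
`3n+3, 3n-3`, the product `x₁³ · w x₁³ w⁻¹ = (3n+3 3n+2)(3n+3 3n-3)` is a 3-cycle.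
A 3-cycle of `H` stabilizes every nontrivial block, so a nontrivial block through `3n+3` contains
`3n+2`; it is then stable under `x₂` (which fixes `3n+3`) and `x₃` (which maps `3n+2` to `3n+3`).
Every `k < 3n+3` is sent to `k+1` by `x₂` or by `x₃`, so such a block is everything.
-/

open Equiv Equiv.Perm MulAction Finset
open scoped Pointwise

section Blocks

variable {α : Type*} {G : Subgroup (Perm α)} {B : Set α}

theorem MulAction.IsBlock.apply_mem_iff_of_apply_mem (hB : IsBlock G B) {g : Perm α}
    (hg : g ∈ G) {a : α} (ha : a ∈ B) (hga : g a ∈ B) (x : α) : g x ∈ B ↔ x ∈ B := by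
  have hfix : (⟨g, hg⟩ : G) • B = B := hB.smul_eq_of_mem ha hga
  conv_rhs => rw [← Set.smul_mem_smul_set_iff (a := (⟨g, hg⟩ : G)), hfix]
  rfl

variable [Fintype α] [DecidableEq α]

theorem MulAction.IsBlock.isThreeCycle_apply_mem_iff (hB : IsBlock G B) (hBnt : B.Nontrivial)
    {c : Perm α} (hc : c ∈ G) (hc3 : IsThreeCycle c) (x : α) : c x ∈ B ↔ x ∈ B := by
  obtain ⟨a, ha, b, hb, hab⟩ := hBnt
  by_cases hca : c a = a
  · exact hB.apply_mem_iff_of_apply_mem hc ha (by rwa [hca]) x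
  by_cases hcb : c b = b
  · exact hB.apply_mem_iff_of_apply_mem hc hb (by rwa [hcb]) x
  by_contra hx
  have hout : ∀ y ∈ B, c y ∉ B := fun y hy hcy =>
    hx (hB.apply_mem_iff_of_apply_mem hc hy hcy x)
  -- `a` and `b` lie in the single 3-cycle of `c`, so `b = c a` or `c b = a`
  obtain ⟨i, hi, rfl⟩ := (hc3.isCycle.sameCycle hca hcb).exists_pow_eq'
  rw [hc3.orderOf] at hi
  interval_cases i
  · exact hab rfl
  · exact hout a ha (by simpa using hb)
  · refine hout _ hb ?_
    have hcube : c ^ 3 = 1 := hc3.orderOf ▸ pow_orderOf_eq_one c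
    rwa [← Perm.mul_apply, ← pow_succ', hcube, Perm.one_apply]

end Blocks

theorem Equiv.Perm.cycleType_eq_replicate_of_pow_prime_eq_one_s18 {α : Type*} [Fintype α]
    [DecidableEq α] {σ : Perm α} {p : ℕ} [hp : Fact p.Prime] (hσ : σ ^ p = 1) :
    σ.cycleType = Multiset.replicate (#σ.support / p) p := by
  have h := cycleType_of_pow_prime_eq_one hσ
  have hsum : #σ.support = Multiset.card σ.cycleType * p := by
    rw [← sum_cycleType, h, Multiset.sum_replicate, smul_eq_mul, Multiset.card_replicate]
  rwa [hsum, Nat.mul_div_cancel _ hp.out.pos]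

namespace F23

/-- `s + 3i ↦ s + 3i + 1 ↦ s + 3i + 2 ↦ s + 3i` for `i < n`, identity elsewhere. -/
def rotBlocks (s n k : ℕ) : ℕ :=
  if s ≤ k ∧ k < s + 3 * n then if (k - s) % 3 = 2 then k - 2 else k + 1 else k

section RotBlocks

variable {s n k : ℕ}

theorem rotBlocks_of_mod_ne_two (h₁ : s ≤ k) (h₂ : k < s + 3 * n) (h₃ : (k - s) % 3 ≠ 2) :
    rotBlocks s n k = k + 1 := by
  simp [rotBlocks, *]

theorem rotBlocks_of_mod_eq_two (h₁ : s ≤ k) (h₂ : k < s + 3 * n) (h₃ : (k - s) % 3 = 2) :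
    rotBlocks s n k = k - 2 := by
  simp [rotBlocks, *]

theorem rotBlocks_of_not_mem (h : ¬(s ≤ k ∧ k < s + 3 * n)) : rotBlocks s n k = k := by
  simp [rotBlocks, h]

theorem rotBlocks_lt {N : ℕ} (h : s + 3 * n ≤ N) (hk : k < N) : rotBlocks s n k < N := by
  unfold rotBlocks; split_ifs <;> omega

theorem rotBlocks_rotBlocks_rotBlocks : rotBlocks s n (rotBlocks s n (rotBlocks s n k)) = k := by
  unfold rotBlocks; split_ifs <;> omega

end RotBlocks

def blockCycles {N : ℕ} (s n : ℕ) (h : s + 3 * n ≤ N) : Perm (Fin N) where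
  toFun x := ⟨rotBlocks s n x, rotBlocks_lt h x.2⟩
  invFun x := ⟨rotBlocks s n (rotBlocks s n x), rotBlocks_lt h (rotBlocks_lt h x.2)⟩
  left_inv _ := Fin.ext rotBlocks_rotBlocks_rotBlocks
  right_inv _ := Fin.ext rotBlocks_rotBlocks_rotBlocks

section BlockCycles

variable {N s n : ℕ} (h : s + 3 * n ≤ N)

@[simp]
theorem blockCycles_apply_val (x : Fin N) : (blockCycles s n h x : ℕ) = rotBlocks s n x := rfl

theorem blockCycles_pow_three : blockCycles s n h ^ 3 = 1 := by
  ext x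
  simp [pow_succ, rotBlocks_rotBlocks_rotBlocks]

theorem support_blockCycles :
    (blockCycles s n h).support =
      (Ico s (s + 3 * n)).attachFin (fun k hk => by rw [mem_Ico] at hk; omega) := by
  ext x
  simp only [mem_support, ne_eq, Fin.ext_iff, blockCycles_apply_val, mem_attachFin, mem_Ico,
    rotBlocks]
  split_ifs <;> omega

theorem cycleType_blockCycles : (blockCycles s n h).cycleType = Multiset.replicate n 3 := by
  have : Fact (Nat.Prime 3) := ⟨Nat.prime_three⟩
  rw [cycleType_eq_replicate_of_pow_prime_eq_one_s18 (blockCycles_pow_three h), support_blockCycles,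
    card_attachFin, Nat.card_Ico]
  congr 1
  omega

end BlockCycles

section Triple

variable (n : ℕ)

def endSwaps : Perm (Fin (3 * n + 4)) :=
  swap ⟨0, by omega⟩ ⟨1, by omega⟩ * swap ⟨3 * n + 2, by omega⟩ (Fin.last _)

def x₁ : Perm (Fin (3 * n + 4)) := endSwaps n * blockCycles 2 n (by omega)

def x₂ : Perm (Fin (3 * n + 4)) := blockCycles 0 (n + 1) (by omega)

def x₃ : Perm (Fin (3 * n + 4)) := blockCycles 1 (n + 1) (by omega)

theorem disjoint_endSwaps_blockCycles : Disjoint (endSwaps n) (blockCycles 2 n (by omega)) := by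
  intro x
  simp only [endSwaps, Perm.mul_apply, Fin.ext_iff, swap_apply_def, apply_ite Fin.val,
    Fin.val_last, blockCycles_apply_val, rotBlocks]
  split_ifs <;> omega

theorem endSwaps_mul_self : endSwaps n * endSwaps n = 1 := by
  ext x
  simp only [endSwaps, Perm.mul_apply, Perm.one_apply, swap_apply_def, apply_ite Fin.val,
    Fin.ext_iff, Fin.val_last]
  split_ifs <;> simp_all

theorem x₁_pow_three : x₁ n ^ 3 = endSwaps n := by
  rw [x₁, (disjoint_endSwaps_blockCycles n).commute.mul_pow, blockCycles_pow_three, mul_one,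
    pow_succ, sq, endSwaps_mul_self, one_mul]

theorem x₁_mul_x₂_mul_x₃ : x₁ n * x₂ n * x₃ n = 1 := by
  ext x
  have hy : (x₃ n x : ℕ) = rotBlocks 1 (n + 1) x := rfl
  have hz : (x₂ n (x₃ n x) : ℕ) = rotBlocks 0 (n + 1) (x₃ n x) := rfl
  simp only [Perm.mul_apply, Perm.one_apply, x₁, endSwaps, swap_apply_def, apply_ite Fin.val,
    Fin.ext_iff, Fin.val_last, blockCycles_apply_val]
  generalize x₂ n (x₃ n x) = z at hz ⊢
  generalize x₃ n x = y at hy hz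
  unfold rotBlocks at *
  split_ifs at * <;> omega

theorem cycleType_x₁ : (x₁ n).cycleType = 2 ::ₘ 2 ::ₘ Multiset.replicate n 3 := by
  rw [x₁, (disjoint_endSwaps_blockCycles n).cycleType_mul, endSwaps,
    cycleType_swap_mul_swap_of_nodup (by simp [Fin.ext_iff]), cycleType_blockCycles]
  rfl

theorem cycleType_x₂ : (x₂ n).cycleType = Multiset.replicate (n + 1) 3 :=
  cycleType_blockCycles _

theorem cycleType_x₃ : (x₃ n).cycleType = Multiset.replicate (n + 1) 3 :=
  cycleType_blockCycles _

def conjugator : Perm (Fin (3 * n + 4)) :=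
  x₃ n * x₂ n * x₃ n * x₂ n ^ 2 * x₃ n * x₂ n * x₃ n ^ 2

def threeCycle : Perm (Fin (3 * n + 4)) :=
  swap (Fin.last _) ⟨3 * n + 2, by omega⟩ * swap (Fin.last _) ⟨3 * n - 3, by omega⟩

theorem isThreeCycle_threeCycle : IsThreeCycle (threeCycle n) :=
  isThreeCycle_swap_mul_swap_same (by simp [Fin.ext_iff]) (by simp [Fin.ext_iff]; omega)
    (by simp [Fin.ext_iff]; omega)

variable {n}

theorem conjugator_mul_endSwaps_mul_inv (hn : 2 ≤ n) :
    conjugator n * endSwaps n * (conjugator n)⁻¹ =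
      swap ⟨0, by omega⟩ ⟨1, by omega⟩ * swap (Fin.last _) ⟨3 * n - 3, by omega⟩ := by
  have h0 : conjugator n ⟨0, by omega⟩ = ⟨0, by omega⟩ := Fin.ext <| by
    simp (disch := omega) only [conjugator, x₂, x₃, Perm.mul_apply, sq, blockCycles_apply_val,
      rotBlocks_of_mod_ne_two, rotBlocks_of_mod_eq_two, rotBlocks_of_not_mem]
  have h1 : conjugator n ⟨1, by omega⟩ = ⟨1, by omega⟩ := Fin.ext <| by
    simp (disch := omega) only [conjugator, x₂, x₃, Perm.mul_apply, sq, blockCycles_apply_val,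
      rotBlocks_of_mod_ne_two, rotBlocks_of_mod_eq_two]
  have h2 : conjugator n ⟨3 * n + 2, by omega⟩ = Fin.last _ := Fin.ext <| by
    simp (disch := omega) only [conjugator, x₂, x₃, Perm.mul_apply, sq, blockCycles_apply_val,
      rotBlocks_of_mod_ne_two, rotBlocks_of_mod_eq_two, rotBlocks_of_not_mem, Fin.val_last]
    omega
  have h3 : conjugator n (Fin.last _) = ⟨3 * n - 3, by omega⟩ := Fin.ext <| by
    simp (disch := omega) only [conjugator, x₂, x₃, Perm.mul_apply, sq, blockCycles_apply_val,
      rotBlocks_of_mod_ne_two, rotBlocks_of_mod_eq_two, Fin.val_last]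
    omega
  rw [endSwaps, show ∀ g a b : Perm (Fin (3 * n + 4)), g * (a * b) * g⁻¹ =
    (g * a * g⁻¹) * (g * b * g⁻¹) by intros; group, ← swap_apply_apply, ← swap_apply_apply,
    h0, h1, h2, h3]

theorem x₁_pow_three_mul_conj (hn : 2 ≤ n) :
    x₁ n ^ 3 * (conjugator n * x₁ n ^ 3 * (conjugator n)⁻¹) = threeCycle n := by
  rw [x₁_pow_three, conjugator_mul_endSwaps_mul_inv hn]
  ext x
  simp only [threeCycle, endSwaps, Perm.mul_apply, swap_apply_def, apply_ite Fin.val,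
    Fin.ext_iff, Fin.val_last]
  split_ifs <;> simp_all

theorem eq_univ_of_apply_mem {S : Set (Fin (3 * n + 4))} (h₂ : ∀ x, x₂ n x ∈ S → x ∈ S)
    (h₃ : ∀ x, x₃ n x ∈ S → x ∈ S) (hlast : Fin.last _ ∈ S) : S = Set.univ := by
  suffices h : ∀ d (x : Fin (3 * n + 4)), x.val + d = 3 * n + 3 → x ∈ S from
    Set.eq_univ_of_forall fun x => h (3 * n + 3 - x) x (by omega)
  intro d
  induction d with
  | zero =>
    intro x hx
    convert hlast
    exact Fin.ext hx
  | succ d ih =>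
    intro x hx
    have hsucc : (⟨x + 1, by omega⟩ : Fin (3 * n + 4)) ∈ S := ih _ (by simp only; omega)
    by_cases hx3 : x.val % 3 = 2
    · refine h₃ x (cast (congrArg (· ∈ S) (Fin.ext ?_)) hsucc)
      simp only [x₃, blockCycles_apply_val]
      rw [rotBlocks_of_mod_ne_two (by omega) (by omega) (by omega)]
    · refine h₂ x (cast (congrArg (· ∈ S) (Fin.ext ?_)) hsucc)
      simp only [x₂, blockCycles_apply_val]
      rw [rotBlocks_of_mod_ne_two (by omega) (by omega) (by omega)]

theorem threeCycle_mem_closure (hn : 2 ≤ n) :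
    threeCycle n ∈ Subgroup.closure {x₁ n, x₂ n, x₃ n} := by
  have mem₁ : x₁ n ∈ Subgroup.closure {x₁ n, x₂ n, x₃ n} := Subgroup.subset_closure (by simp)
  have mem₂ : x₂ n ∈ Subgroup.closure {x₁ n, x₂ n, x₃ n} := Subgroup.subset_closure (by simp)
  have mem₃ : x₃ n ∈ Subgroup.closure {x₁ n, x₂ n, x₃ n} := Subgroup.subset_closure (by simp)
  have memW : conjugator n ∈ Subgroup.closure {x₁ n, x₂ n, x₃ n} := by
    unfold conjugator
    exact mul_mem (mul_mem (mul_mem (mul_mem (mul_mem (mul_mem mem₃ mem₂) mem₃) (pow_mem mem₂ 2))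
      mem₃) mem₂) (pow_mem mem₃ 2)
  rw [← x₁_pow_three_mul_conj hn]
  exact mul_mem (pow_mem mem₁ 3) (mul_mem (mul_mem memW (pow_mem mem₁ 3)) (inv_mem memW))

theorem isPreprimitive_closure (hn : 2 ≤ n) :
    IsPreprimitive (Subgroup.closure {x₁ n, x₂ n, x₃ n}) (Fin (3 * n + 4)) := by
  set H := Subgroup.closure {x₁ n, x₂ n, x₃ n}
  have mem₂ : x₂ n ∈ H := Subgroup.subset_closure (by simp)
  have mem₃ : x₃ n ∈ H := Subgroup.subset_closure (by simp)
  have : IsPretransitive H (Fin (3 * n + 4)) := by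
    rw [isPretransitive_iff_orbit_eq_univ (Fin.last _)]
    refine eq_univ_of_apply_mem (fun x hx => ?_) (fun x hx => ?_) (mem_orbit_self _)
    · exact orbit_eq_iff.mpr hx ▸ mem_orbit_smul (⟨x₂ n, mem₂⟩ : H) x
    · exact orbit_eq_iff.mpr hx ▸ mem_orbit_smul (⟨x₃ n, mem₃⟩ : H) x
  refine .of_isTrivialBlock_base (Fin.last _) fun {B} hlast hB => or_iff_not_imp_left.mpr ?_
  intro hBnt
  have hC := hB.isThreeCycle_apply_mem_iff (Set.not_subsingleton_iff.mp hBnt)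
    (threeCycle_mem_closure hn) (isThreeCycle_threeCycle n)
  have hpenult : (⟨3 * n + 2, by omega⟩ : Fin (3 * n + 4)) ∈ B := by
    have hval : threeCycle n (threeCycle n (Fin.last _)) = ⟨3 * n + 2, by omega⟩ := Fin.ext <| by
      simp only [threeCycle, Perm.mul_apply, swap_apply_def, apply_ite Fin.val, Fin.ext_iff,
        Fin.val_last]
      split_ifs <;> omega
    exact hval ▸ (hC _).mpr ((hC _).mpr hlast)
  have hx₂ : x₂ n (Fin.last _) = Fin.last _ := Fin.ext <| by
    simp (disch := omega) only [x₂, blockCycles_apply_val, Fin.val_last, rotBlocks_of_not_mem]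
  have hx₃ : x₃ n ⟨3 * n + 2, by omega⟩ = Fin.last _ := Fin.ext <| by
    simp (disch := omega) only [x₃, blockCycles_apply_val, Fin.val_last, rotBlocks_of_mod_ne_two]
  exact eq_univ_of_apply_mem
    (fun x => (hB.apply_mem_iff_of_apply_mem mem₂ hlast (by rwa [hx₂]) x).mp)
    (fun x => (hB.apply_mem_iff_of_apply_mem mem₃ hpenult (by rwa [hx₃]) x).mp) hlast

theorem alternatingGroup_le_closure (hn : 2 ≤ n) :
    alternatingGroup (Fin (3 * n + 4)) ≤ Subgroup.closure {x₁ n, x₂ n, x₃ n} :=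
  alternatingGroup_le_of_isPreprimitive_of_isThreeCycle_mem (isPreprimitive_closure hn)
    (isThreeCycle_threeCycle n) (threeCycle_mem_closure hn)

end Triple

end F23

/-- **Lemma 9.2, case F2.3**: for every `ℓ ≥ 9` with `ℓ ≡ 1 (mod 3)` there is a
product-one triple `x₁·x₂·x₃ = 1` in `Sym(ℓ)` generating a subgroup containing
`Alt(ℓ)`, where `x₁` has cycle type `[2²,3^{(ℓ−4)/3}]` (no fixed points) and
`x₂, x₃` both have cycle type `[1,3^{(ℓ−1)/3}]` (one fixed point). -/
theorem statement18 (ℓ : ℕ) (hℓ : 9 ≤ ℓ) (h3 : ℓ % 3 = 1) :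
    ∃ x₁ x₂ x₃ : Equiv.Perm (Fin ℓ),
      x₁ * x₂ * x₃ = 1 ∧
      alternatingGroup (Fin ℓ) ≤ Subgroup.closure {x₁, x₂, x₃} ∧
      x₁.cycleType = 2 ::ₘ 2 ::ₘ Multiset.replicate ((ℓ - 4) / 3) 3 ∧
      x₂.cycleType = Multiset.replicate ((ℓ - 1) / 3) 3 ∧
      x₃.cycleType = Multiset.replicate ((ℓ - 1) / 3) 3 := by
  obtain ⟨n, rfl⟩ : ∃ n, ℓ = 3 * n + 4 := ⟨(ℓ - 4) / 3, by omega⟩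
  rw [show (3 * n + 4 - 4) / 3 = n by omega, show (3 * n + 4 - 1) / 3 = n + 1 by omega]
  exact ⟨F23.x₁ n, F23.x₂ n, F23.x₃ n, F23.x₁_mul_x₂_mul_x₃ n,
    F23.alternatingGroup_le_closure (by omega), F23.cycleType_x₁ n, F23.cycleType_x₂ n,
    F23.cycleType_x₃ n⟩
end
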